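/- arXiv:2601.09508 — 7 statements merged into one kernel-verified Lean document; each statement's English description precedes it below -/
import Mathlib

section
/- If M follows a Poisson distribution with parameter λ ≥ 0, then for every finite subset E ⊆ A the probability that all boxes in E are empty factorizes as a product: P(ν_ℓ = 0 for all ℓ ∈ E) = ∏_{ℓ∈E} exp(−λ f_ℓ). -/
open MeasureTheory ProbabilityTheory

/-- In the occupancy model, if the number of balls `M` is Poisson
distributed with parameter `λ ≥ 0`, then for every finite set `E` of boxes the
probability that all boxes of `E` are empty factorizes as `∏_{ℓ ∈ E} exp (-λ f ℓ)`. -/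
theorem occupancy_poisson_empty_factorizes
    {Ω A : Type*} [MeasurableSpace Ω] [MeasurableSpace A]
    [MeasurableSingletonClass A] [Countable A] [DecidableEq A]
    (μ : Measure Ω) [IsProbabilityMeasure μ]
    (f : A → ℝ) (hf0 : ∀ ℓ, 0 ≤ f ℓ) (hf1 : ∑' ℓ, f ℓ = 1)
    (M : Ω → ℕ) (hM : Measurable M)
    (lam : ℝ) (hlam : 0 ≤ lam)
    (hMpois : ∀ m : ℕ, (μ {ω | M ω = m}).toReal
        = Real.exp (-lam) * lam ^ m / (Nat.factorial m))
    (X : ℕ → Ω → A) (hX : ∀ k, Measurable (X k))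
    (hXdist : ∀ k ℓ, (μ {ω | X k ω = ℓ}).toReal = f ℓ)
    (hXiid : iIndepFun X μ)
    (hMX : IndepFun M (fun ω k => X k ω) μ)
    (ν : A → Ω → ℕ)
    (hν : ∀ ℓ ω, ν ℓ ω = ∑ k ∈ Finset.range (M ω), (if X k ω = ℓ then 1 else 0))
    (E : Finset A) :
    (μ {ω | ∀ ℓ ∈ E, ν ℓ ω = 0}).toReal = ∏ ℓ ∈ E, Real.exp (-(lam * f ℓ)) := by
  classical
  set p : ℝ := ∑ ℓ ∈ E, f ℓ with hp
  have hfsum : Summable f := by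
    by_contra h
    rw [tsum_eq_zero_of_not_summable h] at hf1
    norm_num at hf1
  have hp0 : 0 ≤ p := Finset.sum_nonneg fun ℓ _ => hf0 ℓ
  have hp1 : p ≤ 1 := hf1 ▸ Summable.sum_le_tsum E (fun ℓ _ => hf0 ℓ) hfsum
  have hmeasE : MeasurableSet (↑E : Set A) := E.measurableSet
  -- measure of a single box preimage
  have hsingle : ∀ k ℓ, μ (X k ⁻¹' {ℓ}) = ENNReal.ofReal (f ℓ) := by
    intro k ℓ
    have h1 : X k ⁻¹' {ℓ} = {ω | X k ω = ℓ} := rfl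
    rw [h1, ← ENNReal.ofReal_toReal (measure_ne_top μ _), hXdist k ℓ]
  -- measure that X k lands in E
  have hinE : ∀ k, μ (X k ⁻¹' ↑E) = ENNReal.ofReal p := by
    intro k
    have hE : (X k ⁻¹' ↑E) = ⋃ ℓ ∈ E, X k ⁻¹' {ℓ} := by
      ext ω; simp
    rw [hE, measure_biUnion_finset ?_ (fun ℓ _ => (hX k) (measurableSet_singleton ℓ))]
    · rw [ENNReal.ofReal_sum_of_nonneg fun ℓ _ => hf0 ℓ]
      exact Finset.sum_congr rfl fun ℓ _ => hsingle k ℓ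
    · intro a _ b _ hab
      refine Set.disjoint_left.mpr fun ω ha hb => hab ?_
      simp only [Set.mem_preimage, Set.mem_singleton_iff] at ha hb
      rw [← ha, ← hb]
  -- measure that X k avoids E
  have hnotE : ∀ k, μ (X k ⁻¹' (↑E)ᶜ) = ENNReal.ofReal (1 - p) := by
    intro k
    rw [Set.preimage_compl, measure_compl ((hX k) hmeasE) (measure_ne_top μ _),
      measure_univ, hinE k, ENNReal.ofReal_sub 1 hp0, ENNReal.ofReal_one]
  -- the event decomposes over the value of M
  have hset : {ω | ∀ ℓ ∈ E, ν ℓ ω = 0}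
      = ⋃ m, (M ⁻¹' {m} ∩ ⋂ k ∈ Finset.range m, X k ⁻¹' (↑E)ᶜ) := by
    ext ω
    simp only [Set.mem_setOf_eq, Set.mem_iUnion, Set.mem_inter_iff, Set.mem_preimage,
      Set.mem_singleton_iff, Set.mem_iInter, Set.mem_compl_iff, Finset.mem_coe,
      Finset.mem_range]
    constructor
    · intro h
      refine ⟨M ω, rfl, fun k hk hkE => ?_⟩
      have h0 := h (X k ω) hkE
      rw [hν] at h0
      have := Finset.sum_eq_zero_iff.mp h0 k (Finset.mem_range.mpr hk)
      simp at this
    · rintro ⟨m, rfl, h⟩ ℓ hℓ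
      rw [hν]
      apply Finset.sum_eq_zero
      intro k hk
      rw [if_neg]
      intro hXk
      exact h k (Finset.mem_range.mp hk) (hXk ▸ hℓ)
  -- measurability of the pieces
  have hBmeas : ∀ m : ℕ, MeasurableSet (⋂ k ∈ Finset.range m, X k ⁻¹' (↑E)ᶜ) := by
    intro m
    exact MeasurableSet.biInter (Finset.range m).countable_toSet
      fun k _ => (hX k) hmeasE.compl
  have hAmeas : ∀ m : ℕ,
      MeasurableSet (M ⁻¹' {m} ∩ ⋂ k ∈ Finset.range m, X k ⁻¹' (↑E)ᶜ) :=
    fun m => (hM (measurableSet_singleton m)).inter (hBmeas m)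
  -- independence of M and the tail event
  have hBpre : ∀ m : ℕ, (⋂ k ∈ Finset.range m, X k ⁻¹' (↑E)ᶜ)
      = (fun ω => fun k => X k ω) ⁻¹' {g : ℕ → A | ∀ k ∈ Finset.range m, g k ∉ E} := by
    intro m; ext ω; simp
  have hSmeas : ∀ m : ℕ, MeasurableSet {g : ℕ → A | ∀ k ∈ Finset.range m, g k ∉ E} := by
    intro m
    have : {g : ℕ → A | ∀ k ∈ Finset.range m, g k ∉ E}
        = ⋂ k ∈ Finset.range m, (fun g : ℕ → A => g k) ⁻¹' (↑E)ᶜ := by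
      ext g; simp
    rw [this]
    exact MeasurableSet.biInter (Finset.range m).countable_toSet
      fun k _ => (measurable_pi_apply k) hmeasE.compl
  have hindep : ∀ m : ℕ,
      μ (M ⁻¹' {m} ∩ ⋂ k ∈ Finset.range m, X k ⁻¹' (↑E)ᶜ)
        = μ (M ⁻¹' {m}) * μ (⋂ k ∈ Finset.range m, X k ⁻¹' (↑E)ᶜ) := by
    intro m
    rw [hBpre m]
    exact hMX.measure_inter_preimage_eq_mul _ _ (measurableSet_singleton m) (hSmeas m)
  -- iid factorization
  have hiid : ∀ m : ℕ, μ (⋂ k ∈ Finset.range m, X k ⁻¹' (↑E)ᶜ)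
      = (ENNReal.ofReal (1 - p)) ^ m := by
    intro m
    have := (iIndepFun_iff_measure_inter_preimage_eq_mul.mp hXiid)
      (Finset.range m) (sets := fun _ => (↑E)ᶜ) (fun k _ => hmeasE.compl)
    rw [this, Finset.prod_congr rfl fun k _ => hnotE k, Finset.prod_const,
      Finset.card_range]
  -- measure of M = m
  have hMm : ∀ m : ℕ, μ (M ⁻¹' {m})
      = ENNReal.ofReal (Real.exp (-lam) * lam ^ m / (Nat.factorial m)) := by
    intro m
    have h1 : M ⁻¹' {m} = {ω | M ω = m} := rfl
    rw [h1, ← ENNReal.ofReal_toReal (measure_ne_top μ _), hMpois m]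
  -- disjointness
  have hdisj : Pairwise (Function.onFun Disjoint
      fun m => M ⁻¹' {m} ∩ ⋂ k ∈ Finset.range m, X k ⁻¹' (↑E)ᶜ) := by
    intro m n hmn
    refine Set.disjoint_left.mpr fun ω hm hn => hmn ?_
    have h1 : M ω = m := hm.1
    have h2 : M ω = n := hn.1
    rw [← h1, ← h2]
  -- series term
  set c : ℕ → ℝ := fun m => Real.exp (-lam) * (lam * (1 - p)) ^ m / (Nat.factorial m)
    with hc
  have hcnonneg : ∀ m, 0 ≤ c m := by
    intro m
    apply div_nonneg (mul_nonneg (Real.exp_nonneg _) (pow_nonneg ?_ _)) (by positivity)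
    exact mul_nonneg hlam (by linarith)
  have hcsum : Summable c := by
    have := (Real.summable_pow_div_factorial (lam * (1 - p))).mul_left (Real.exp (-lam))
    exact this.congr fun m => by simp only [hc]; ring
  have hterm : ∀ m : ℕ,
      μ (M ⁻¹' {m}) * μ (⋂ k ∈ Finset.range m, X k ⁻¹' (↑E)ᶜ) = ENNReal.ofReal (c m) := by
    intro m
    rw [hMm m, hiid m, ← ENNReal.ofReal_pow (by linarith), ← ENNReal.ofReal_mul
      (by positivity)]
    congr 1
    rw [hc]
    simp only []
    rw [mul_pow]
    ring
  -- put together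
  have hmain : μ {ω | ∀ ℓ ∈ E, ν ℓ ω = 0} = ENNReal.ofReal (∑' m, c m) := by
    rw [hset, measure_iUnion hdisj hAmeas,
      ENNReal.ofReal_tsum_of_nonneg hcnonneg hcsum]
    exact tsum_congr fun m => by rw [hindep m, hterm m]
  -- evaluate the series
  have hsum : ∑' m, c m = Real.exp (-(lam * p)) := by
    have hexp : ∑' m : ℕ, (lam * (1 - p)) ^ m / (Nat.factorial m)
        = Real.exp (lam * (1 - p)) := by
      rw [Real.exp_eq_exp_ℝ, NormedSpace.exp_eq_tsum_div]
    calc ∑' m, c m = Real.exp (-lam) * ∑' m : ℕ, (lam * (1 - p)) ^ m / (Nat.factorial m) := by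
          rw [← tsum_mul_left]
          exact tsum_congr fun m => by rw [hc]; ring
      _ = Real.exp (-lam) * Real.exp (lam * (1 - p)) := by rw [hexp]
      _ = Real.exp (-(lam * p)) := by rw [← Real.exp_add]; ring_nf
  rw [hmain, hsum, ENNReal.toReal_ofReal (Real.exp_nonneg _)]
  rw [← Real.exp_sum]
  congr 1
  simp [hp, Finset.mul_sum, Finset.sum_neg_distrib]
end

section
/- If M follows a Poisson distribution with parameter λ ≥ 0, then the family of occupancy indicators (ν'_ℓ)_{ℓ∈A} is mutually independent, and each ν'_ℓ is a Bernoulli random variable with success probability 1 − exp(−λ f_ℓ). -/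
open MeasureTheory ProbabilityTheory

/-- Core computation: the probability that no ball among the first `M` falls in a
finite set `S` of labels equals `exp (-(lam * ∑ ℓ ∈ S, f ℓ))`. -/
lemma occ_core_aux
    {Ω A : Type*} [MeasurableSpace Ω] [MeasurableSpace A]
    [MeasurableSingletonClass A] [DecidableEq A]
    (μ : Measure Ω) [IsProbabilityMeasure μ]
    (f : A → ℝ) (hf0 : ∀ ℓ, 0 ≤ f ℓ) (hf1 : ∑' ℓ, f ℓ = 1)
    (M : Ω → ℕ) (hM : Measurable M)
    (lam : ℝ) (hlam : 0 ≤ lam)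
    (hMpois : ∀ m : ℕ, (μ {ω | M ω = m}).toReal
        = Real.exp (-lam) * lam ^ m / (Nat.factorial m))
    (X : ℕ → Ω → A) (hX : ∀ k, Measurable (X k))
    (hXdist : ∀ k ℓ, (μ {ω | X k ω = ℓ}).toReal = f ℓ)
    (hXiid : iIndepFun X μ)
    (hMX : IndepFun M (fun ω k => X k ω) μ)
    (S : Finset A) :
    MeasurableSet {ω | ∀ k < M ω, X k ω ∉ (S : Set A)} ∧
      (μ {ω | ∀ k < M ω, X k ω ∉ (S : Set A)}).toReal
        = Real.exp (-(lam * ∑ ℓ ∈ S, f ℓ)) := by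
  classical
  set B : Set A := (S : Set A) with hB
  have hBmeas : MeasurableSet B := S.finite_toSet.measurableSet
  set p : ℝ := ∑ ℓ ∈ S, f ℓ with hp
  have hsumm : Summable f := by
    by_contra h
    rw [tsum_eq_zero_of_not_summable h] at hf1
    norm_num at hf1
  have hp0 : 0 ≤ p := Finset.sum_nonneg fun i _ => hf0 i
  have hp1 : p ≤ 1 := hf1 ▸ Summable.sum_le_tsum S (fun i _ => hf0 i) hsumm
  have h1p : 0 ≤ 1 - p := by linarith
  -- per-ball probability of landing in S
  have hball : ∀ k, (μ (X k ⁻¹' B)).toReal = p := by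
    intro k
    have hdisj : (S : Set A).PairwiseDisjoint fun ℓ => X k ⁻¹' {ℓ} := by
      intro a _ b _ hab
      rw [Function.onFun, Set.disjoint_left]
      intro ω ha hb
      simp only [Set.mem_preimage, Set.mem_singleton_iff] at ha hb
      exact hab (ha ▸ hb ▸ rfl)
    have hcup : X k ⁻¹' B = ⋃ ℓ ∈ S, X k ⁻¹' {ℓ} := by
      ext ω; simp [hB]
    rw [hcup, measure_biUnion_finset hdisj (fun ℓ _ => hX k (measurableSet_singleton ℓ)),
      ENNReal.toReal_sum (fun ℓ _ => measure_ne_top μ _)]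
    exact Finset.sum_congr rfl fun ℓ _ => hXdist k ℓ
  -- complement probability
  have hballc : ∀ k, μ (X k ⁻¹' Bᶜ) = ENNReal.ofReal (1 - p) := by
    intro k
    have hXB : μ (X k ⁻¹' B) = ENNReal.ofReal p := by
      rw [← hball k, ENNReal.ofReal_toReal (measure_ne_top μ _)]
    rw [Set.preimage_compl, measure_compl (hX k hBmeas) (measure_ne_top μ _),
      measure_univ, hXB, ENNReal.ofReal_sub _ hp0, ENNReal.ofReal_one]
  -- probability that the first m balls all avoid S
  have hCm : ∀ m : ℕ, μ (⋂ k ∈ Finset.range m, X k ⁻¹' Bᶜ)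
      = ENNReal.ofReal ((1 - p) ^ m) := by
    intro m
    rw [hXiid.measure_inter_preimage_eq_mul (Finset.range m)
      (sets := fun _ => Bᶜ) (fun i _ => hBmeas.compl)]
    rw [Finset.prod_congr rfl fun k _ => hballc k, Finset.prod_const,
      Finset.card_range, ← ENNReal.ofReal_pow h1p]
  -- decompose the event over the value of M
  set E : Set Ω := {ω | ∀ k < M ω, X k ω ∉ B} with hE
  have hEeq : E = ⋃ m : ℕ, ((M ⁻¹' {m}) ∩ ⋂ k ∈ Finset.range m, X k ⁻¹' Bᶜ) := by
    ext ω
    simp only [hE, Set.mem_setOf_eq, Set.mem_iUnion, Set.mem_inter_iff, Set.mem_preimage,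
      Set.mem_singleton_iff, Set.mem_iInter, Finset.mem_range, Set.mem_compl_iff]
    constructor
    · intro h; exact ⟨M ω, rfl, fun k hk => h k hk⟩
    · rintro ⟨m, hm, h⟩ k hk; exact h k (hm ▸ hk)
  have hpiece : ∀ m : ℕ,
      MeasurableSet ((M ⁻¹' {m}) ∩ ⋂ k ∈ Finset.range m, X k ⁻¹' Bᶜ) := fun m =>
    (hM (measurableSet_singleton m)).inter
      (MeasurableSet.biInter (Set.to_countable _) fun k _ => (hX k) hBmeas.compl)
  have hEmeas : MeasurableSet E := by
    rw [hEeq]; exact MeasurableSet.iUnion hpiece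
  have hdisjE : Pairwise (Function.onFun Disjoint
      fun m => (M ⁻¹' {m}) ∩ ⋂ k ∈ Finset.range m, X k ⁻¹' Bᶜ) := by
    intro m n hmn
    rw [Function.onFun, Set.disjoint_left]
    rintro ω ⟨h1, -⟩ ⟨h2, -⟩
    simp only [Set.mem_preimage, Set.mem_singleton_iff] at h1 h2
    exact hmn (h1 ▸ h2 ▸ rfl)
  -- factorize each piece using independence of M and the X's
  have hfac : ∀ m : ℕ, μ ((M ⁻¹' {m}) ∩ ⋂ k ∈ Finset.range m, X k ⁻¹' Bᶜ)
      = μ (M ⁻¹' {m}) * ENNReal.ofReal ((1 - p) ^ m) := by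
    intro m
    set T : Set (ℕ → A) := ⋂ k ∈ Finset.range m, (fun g : ℕ → A => g k) ⁻¹' Bᶜ with hT
    have hTmeas : MeasurableSet T :=
      MeasurableSet.biInter (Set.to_countable _)
        fun k _ => (measurable_pi_apply k) hBmeas.compl
    have hYT : (fun ω k => X k ω) ⁻¹' T = ⋂ k ∈ Finset.range m, X k ⁻¹' Bᶜ := by
      ext ω; simp [hT]
    have := hMX.measure_inter_preimage_eq_mul {m} T (measurableSet_singleton m) hTmeas
    rw [hYT] at this
    rw [this, hCm m]
  have hμE : μ E = ∑' m : ℕ, μ (M ⁻¹' {m}) * ENNReal.ofReal ((1 - p) ^ m) := by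
    rw [hEeq, measure_iUnion hdisjE hpiece]
    exact tsum_congr fun m => hfac m
  have hMm : ∀ m : ℕ, (μ (M ⁻¹' {m})).toReal
      = Real.exp (-lam) * lam ^ m / (Nat.factorial m) := fun m => hMpois m
  have htoReal : (μ E).toReal
      = ∑' m : ℕ, (Real.exp (-lam) * lam ^ m / (Nat.factorial m)) * (1 - p) ^ m := by
    rw [hμE, ENNReal.tsum_toReal_eq
      (fun m => ENNReal.mul_ne_top (measure_ne_top μ _) ENNReal.ofReal_ne_top)]
    refine tsum_congr fun m => ?_
    rw [ENNReal.toReal_mul, ENNReal.toReal_ofReal (pow_nonneg h1p m), hMm m]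
  have hseries : ∑' m : ℕ, (Real.exp (-lam) * lam ^ m / (Nat.factorial m)) * (1 - p) ^ m
      = Real.exp (-(lam * p)) := by
    have h1 : ∀ m : ℕ, (Real.exp (-lam) * lam ^ m / (Nat.factorial m)) * (1 - p) ^ m
        = Real.exp (-lam) * ((lam * (1 - p)) ^ m / (Nat.factorial m)) := by
      intro m
      rw [mul_pow]
      field_simp
    rw [tsum_congr h1, tsum_mul_left]
    have hexp : ∑' m : ℕ, (lam * (1 - p)) ^ m / (Nat.factorial m)
        = Real.exp (lam * (1 - p)) := by
      rw [Real.exp_eq_exp_ℝ, NormedSpace.exp_eq_tsum_div]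
    rw [hexp, ← Real.exp_add]
    ring_nf
  exact ⟨hEmeas, htoReal.trans hseries⟩

/-- In the occupancy model, if the number of balls `M` is Poisson
distributed with parameter `λ ≥ 0`, then the family of occupancy indicators
`ν'_ℓ = 1{ν_ℓ ≥ 1}` is mutually independent and each `ν'_ℓ` is Bernoulli with
success probability `1 - exp (-λ f ℓ)`. -/
theorem occupancy_poisson_indicators_indep_bernoulli
    {Ω A : Type*} [MeasurableSpace Ω] [MeasurableSpace A]
    [MeasurableSingletonClass A] [Countable A] [DecidableEq A]
    (μ : Measure Ω) [IsProbabilityMeasure μ]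
    (f : A → ℝ) (hf0 : ∀ ℓ, 0 ≤ f ℓ) (hf1 : ∑' ℓ, f ℓ = 1)
    (M : Ω → ℕ) (hM : Measurable M)
    (lam : ℝ) (hlam : 0 ≤ lam)
    (hMpois : ∀ m : ℕ, (μ {ω | M ω = m}).toReal
        = Real.exp (-lam) * lam ^ m / (Nat.factorial m))
    (X : ℕ → Ω → A) (hX : ∀ k, Measurable (X k))
    (hXdist : ∀ k ℓ, (μ {ω | X k ω = ℓ}).toReal = f ℓ)
    (hXiid : iIndepFun X μ)
    (hMX : IndepFun M (fun ω k => X k ω) μ)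
    (ν : A → Ω → ℕ)
    (hν : ∀ ℓ ω, ν ℓ ω = ∑ k ∈ Finset.range (M ω), (if X k ω = ℓ then 1 else 0))
    (ν' : A → Ω → ℕ)
    (hν' : ∀ ℓ ω, ν' ℓ ω = if 1 ≤ ν ℓ ω then 1 else 0) :
    iIndepFun ν' μ ∧
    ∀ ℓ, (μ {ω | ν' ℓ ω = 1}).toReal = 1 - Real.exp (-(lam * f ℓ)) ∧
      (μ {ω | ν' ℓ ω = 0}).toReal = Real.exp (-(lam * f ℓ)) := by
  classical
  set Aset : A → Set Ω := fun ℓ => {ω | ν' ℓ ω = 0} with hAset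
  -- characterization of ν' = 0
  have hzero : ∀ ℓ ω, ν' ℓ ω = 0 ↔ ∀ k < M ω, X k ω ≠ ℓ := by
    intro ℓ ω
    have hν0 : ν' ℓ ω = 0 ↔ ν ℓ ω = 0 := by
      rw [hν' ℓ ω]
      rcases Nat.eq_zero_or_pos (ν ℓ ω) with h | h
      · simp [h]
      · simp [Nat.one_le_iff_ne_zero.mpr h.ne', h.ne']
    rw [hν0, hν ℓ ω, Finset.sum_eq_zero_iff]
    constructor
    · intro h k hk hXk
      have := h k (Finset.mem_range.mpr hk)
      rw [if_pos hXk] at this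
      exact one_ne_zero this
    · intro h k hk
      rw [if_neg (h k (Finset.mem_range.mp hk))]
  -- intersections of the events {ν' ℓ = 0}
  have hInter : ∀ SS : Finset A,
      (⋂ ℓ ∈ SS, Aset ℓ) = {ω | ∀ k < M ω, X k ω ∉ (SS : Set A)} := by
    intro SS
    ext ω
    simp only [Set.mem_iInter, hAset, Set.mem_setOf_eq, Finset.mem_coe]
    constructor
    · intro h k hk hkS
      exact (hzero _ ω).mp (h _ hkS) k hk rfl
    · intro h ℓ hℓ
      exact (hzero ℓ ω).mpr fun k hk hXk => h k hk (hXk ▸ hℓ)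
  have hcore := fun SS : Finset A =>
    occ_core_aux μ f hf0 hf1 M hM lam hlam hMpois X hX hXdist hXiid hMX SS
  have hAmeas : ∀ ℓ, MeasurableSet (Aset ℓ) := by
    intro ℓ
    have h := (hcore {ℓ}).1
    have : Aset ℓ = {ω | ∀ k < M ω, X k ω ∉ (({ℓ} : Finset A) : Set A)} := by
      have := hInter {ℓ}
      simpa using this
    rw [this]; exact h
  have hAval : ∀ ℓ, (μ (Aset ℓ)).toReal = Real.exp (-(lam * f ℓ)) := by
    intro ℓ
    have h := (hcore {ℓ}).2
    have heq : Aset ℓ = {ω | ∀ k < M ω, X k ω ∉ (({ℓ} : Finset A) : Set A)} := by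
      have := hInter {ℓ}; simpa using this
    rw [heq, h, Finset.sum_singleton]
  have hIval : ∀ SS : Finset A,
      (μ (⋂ ℓ ∈ SS, Aset ℓ)).toReal = Real.exp (-(lam * ∑ ℓ ∈ SS, f ℓ)) := by
    intro SS
    rw [hInter SS]; exact (hcore SS).2
  -- the product formula in ℝ≥0∞
  have hprodE : ∀ SS : Finset A, μ (⋂ ℓ ∈ SS, Aset ℓ) = ∏ ℓ ∈ SS, μ (Aset ℓ) := by
    intro SS
    refine (ENNReal.toReal_eq_toReal_iff' (measure_ne_top μ _)
      (ENNReal.prod_ne_top fun ℓ _ => measure_ne_top μ _)).mp ?_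
    rw [hIval SS, ENNReal.toReal_prod]
    rw [Finset.prod_congr rfl fun ℓ _ => hAval ℓ, ← Real.exp_sum]
    congr 1
    rw [Finset.mul_sum]
    simp [Finset.sum_neg_distrib]
  -- ν' takes values in {0, 1}
  have hpre : ∀ ℓ (n : ℕ), ν' ℓ ⁻¹' {n}
      = if n = 0 then Aset ℓ else if n = 1 then (Aset ℓ)ᶜ else ∅ := by
    intro ℓ n
    ext ω
    simp only [Set.mem_preimage, Set.mem_singleton_iff]
    split_ifs with h0 h1
    · subst h0; simp [hAset]
    · subst h1
      simp only [Set.mem_compl_iff, hAset, Set.mem_setOf_eq]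
      rw [hν' ℓ ω]
      split_ifs with h <;> simp_all [hν' ℓ ω, h]
    · simp only [Set.mem_empty_iff_false, iff_false]
      rw [hν' ℓ ω]
      split_ifs <;> omega
  have hmeasν' : ∀ ℓ, Measurable (ν' ℓ) := by
    intro ℓ
    refine measurable_to_countable' fun n => ?_
    rw [hpre ℓ n]
    split_ifs
    · exact hAmeas ℓ
    · exact (hAmeas ℓ).compl
    · exact MeasurableSet.empty
  -- comap equals the σ-algebra generated by the single event
  have hcomap : ∀ ℓ, MeasurableSpace.comap (ν' ℓ) inferInstance
      = MeasurableSpace.generateFrom {Aset ℓ} := by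
    intro ℓ
    refine le_antisymm ?_ (MeasurableSpace.generateFrom_le ?_)
    · have hmg : @Measurable Ω ℕ (MeasurableSpace.generateFrom {Aset ℓ}) _ (ν' ℓ) := by
        refine @measurable_to_countable' ℕ Ω _ _
          (MeasurableSpace.generateFrom {Aset ℓ}) (ν' ℓ) (fun n => ?_)
        rw [hpre ℓ n]
        have hA : MeasurableSet[MeasurableSpace.generateFrom {Aset ℓ}] (Aset ℓ) :=
          MeasurableSpace.measurableSet_generateFrom rfl
        split_ifs
        · exact hA
        · exact hA.compl
        · exact @MeasurableSet.empty Ω (MeasurableSpace.generateFrom {Aset ℓ})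
      exact @Measurable.comap_le Ω ℕ (MeasurableSpace.generateFrom {Aset ℓ}) _ (ν' ℓ) hmg
    · rintro t ht
      rw [Set.mem_singleton_iff] at ht
      subst ht
      exact ⟨{0}, measurableSet_singleton 0, by rw [hpre ℓ 0]; simp⟩
  -- independence
  have hindep : iIndepFun ν' μ := by
    rw [iIndepFun_iff_iIndep]
    exact iIndepSets.iIndep (fun ℓ => (hmeasν' ℓ).comap_le) (fun ℓ => {Aset ℓ})
      (fun ℓ => IsPiSystem.singleton _) (fun ℓ => hcomap ℓ)
      (iIndepSets_singleton_iff.mpr hprodE)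
  refine ⟨hindep, fun ℓ => ?_⟩
  have hone : {ω | ν' ℓ ω = 1} = (Aset ℓ)ᶜ := by
    ext ω
    simp only [Set.mem_setOf_eq, Set.mem_compl_iff, hAset]
    rw [hν' ℓ ω]
    split_ifs <;> simp
  have h1 : (μ {ω | ν' ℓ ω = 1}).toReal = 1 - Real.exp (-(lam * f ℓ)) := by
    rw [hone, measure_compl (hAmeas ℓ) (measure_ne_top μ _), measure_univ,
      ENNReal.toReal_sub_of_le prob_le_one ENNReal.one_ne_top, ENNReal.toReal_one, hAval ℓ]
  exact ⟨h1, hAval ℓ⟩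
end

section
/- (Poisson splitting/thinning.) If M follows a Poisson distribution with parameter λ ≥ 0, then the family of occupancy multiplicities (ν_ℓ)_{ℓ∈A} is mutually independent, and each ν_ℓ follows a Poisson distribution with parameter λ f_ℓ. -/
open Finset

theorem prod_fact_update {B : Type*} [Fintype B] [DecidableEq B] (m : B → ℕ) (b : B) (v : ℕ) :
    (fun b' => Nat.factorial (Function.update m b v b')) =
      Function.update (fun b' => Nat.factorial (m b')) b (Nat.factorial v) := by
  funext b'
  by_cases h : b' = b
  · subst h; simp
  · simp [Function.update_of_ne h]

/-- Number of colorings of `Fin n` by `B` with prescribed fiber sizes. -/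
theorem count_colorings {B : Type*} [Fintype B] [DecidableEq B] :
    ∀ (n : ℕ) (m : B → ℕ), (∑ b, m b = n) →
      (Finset.univ.filter (fun c : Fin n → B =>
        ∀ b, (∑ k, if c k = b then 1 else 0) = m b)).card = Nat.multinomial Finset.univ m := by
  intro n
  induction n with
  | zero =>
      intro m hm
      have hm0 : ∀ b, m b = 0 := by
        intro b
        exact Finset.sum_eq_zero_iff.mp hm b (mem_univ b)
      have : (Finset.univ.filter (fun c : Fin 0 → B =>
          ∀ b, (∑ k, if c k = b then 1 else 0) = m b)) = Finset.univ := by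
        apply Finset.filter_true_of_mem
        intro c _ b
        simp [hm0 b]
      rw [this]
      have h2 : Nat.multinomial Finset.univ m = Nat.multinomial Finset.univ (fun _ => 0) :=
        Nat.multinomial_congr (fun b _ => hm0 b)
      rw [h2]
      simp [Nat.multinomial, Finset.card_univ]
  | succ n ih =>
      intro m hm
      classical
      rw [Finset.card_eq_sum_card_fiberwise
        (f := fun c : Fin (n+1) → B => c (Fin.last n)) (t := univ) (fun _ _ => mem_univ _)]
      have hsum_erase : ∀ b : B, m b + ∑ b' ∈ univ.erase b, m b' = n + 1 := by
        intro b
        rw [Finset.add_sum_erase _ _ (mem_univ b)]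
        exact hm
      have hupd_sum : ∀ b : B, m b ≠ 0 → ∑ b', Function.update m b (m b - 1) b' = n := by
        intro b hb
        rw [Finset.sum_update_of_mem (mem_univ b)]
        have := hsum_erase b
        rw [Finset.erase_eq] at this
        omega
      have hb : ∀ b : B,
          ((univ.filter (fun c : Fin (n+1) → B =>
            ∀ b', (∑ k, if c k = b' then 1 else 0) = m b')).filter
              (fun c => c (Fin.last n) = b)).card
          = if m b = 0 then 0 else
              Nat.multinomial Finset.univ (Function.update m b (m b - 1)) := by
        intro b
        by_cases hmb : m b = 0
        · rw [if_pos hmb, Finset.card_eq_zero, Finset.eq_empty_iff_forall_notMem]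
          intro c hc
          rw [Finset.mem_filter] at hc
          obtain ⟨hc1, hc2⟩ := hc
          rw [Finset.mem_filter] at hc1
          have h := hc1.2 b
          rw [hmb] at h
          have := Finset.sum_eq_zero_iff.mp h (Fin.last n) (mem_univ _)
          rw [if_pos hc2] at this
          exact one_ne_zero this
        · rw [if_neg hmb, ← ih (Function.update m b (m b - 1)) (hupd_sum b hmb)]
          apply Finset.card_bij' (fun c _ => c ∘ Fin.castSucc)
            (fun d _ => Fin.snoc d b)
          · -- hi : forward membership
            intro c hc
            rw [Finset.mem_filter] at hc ⊢
            obtain ⟨hc1, hlast⟩ := hc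
            rw [Finset.mem_filter] at hc1
            refine ⟨mem_univ _, ?_⟩
            intro b'
            have hsplit := Fin.sum_univ_castSucc
              (f := fun k : Fin (n+1) => if c k = b' then 1 else 0)
            have hcb' := hc1.2 b'
            rw [hsplit] at hcb'
            by_cases h : b' = b
            · subst h
              rw [if_pos hlast] at hcb'
              simp only [Function.comp_apply, Function.update_self]
              omega
            · rw [Function.update_of_ne h]
              rw [if_neg (by rw [hlast]; exact fun hh => h hh.symm)] at hcb'
              simpa using hcb'
          · -- hj : backward membership
            intro d hd
            rw [Finset.mem_filter] at hd ⊢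
            refine ⟨?_, Fin.snoc_last _ _⟩
            rw [Finset.mem_filter]
            refine ⟨mem_univ _, ?_⟩
            intro b'
            rw [Fin.sum_univ_castSucc (f := fun k : Fin (n+1) => if (Fin.snoc d b : Fin (n+1) → B) k = b' then 1 else 0)]
            simp only [Fin.snoc_castSucc, Fin.snoc_last]
            have hd' := hd.2 b'
            by_cases h : b' = b
            · subst h
              rw [Function.update_self] at hd'
              rw [hd', if_pos rfl]
              omega
            · rw [Function.update_of_ne h] at hd'
              rw [hd', if_neg (fun hh => h hh.symm)]
              omega
          · -- left inverse
            intro c hc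
            rw [Finset.mem_filter] at hc
            funext k
            induction k using Fin.lastCases with
            | last => rw [Fin.snoc_last, hc.2]
            | cast i => rw [Fin.snoc_castSucc]; rfl
          · -- right inverse
            intro d _
            funext k
            simp [Fin.snoc_castSucc]
      rw [Finset.sum_congr rfl (fun b _ => hb b)]
      -- Pascal identity
      apply Nat.eq_of_mul_eq_mul_left (show 0 < ∏ b, Nat.factorial (m b) from
        Finset.prod_pos (fun b _ => Nat.factorial_pos _))
      rw [Finset.mul_sum]
      have hterm : ∀ b : B, (∏ b', Nat.factorial (m b')) *
          (if m b = 0 then 0 else Nat.multinomial Finset.univ (Function.update m b (m b - 1)))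
          = m b * Nat.factorial n := by
        intro b
        by_cases hmb : m b = 0
        · rw [if_pos hmb, hmb]; simp
        · rw [if_neg hmb]
          have hprod : (∏ b', Nat.factorial (m b')) =
              m b * ∏ b', Nat.factorial (Function.update m b (m b - 1) b') := by
            rw [prod_fact_update, Finset.prod_update_of_mem (mem_univ b), ← Finset.erase_eq,
              ← Finset.mul_prod_erase univ (fun b' => Nat.factorial (m b')) (mem_univ b),
              ← mul_assoc]
            congr 1
            exact (Nat.mul_factorial_pred hmb).symm
          rw [hprod, mul_assoc, Nat.multinomial_spec, hupd_sum b hmb]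
      rw [Finset.sum_congr rfl (fun b _ => hterm b), ← Finset.sum_mul]
      rw [hm, Nat.multinomial_spec, hm, Nat.factorial_succ]

open MeasureTheory ProbabilityTheory Finset
open scoped ENNReal

theorem occupancy_key
    {Ω A : Type*} [MeasurableSpace Ω] [MeasurableSpace A]
    [MeasurableSingletonClass A] [DecidableEq A]
    (μ : Measure Ω) [IsProbabilityMeasure μ]
    (f : A → ℝ) (hf0 : ∀ ℓ, 0 ≤ f ℓ) (hfsum : Summable f) (hf1 : ∑' ℓ, f ℓ = 1)
    (M : Ω → ℕ) (hM : Measurable M)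
    (lam : ℝ) (hlam : 0 ≤ lam)
    (hMn : ∀ n : ℕ, μ {ω | M ω = n} = ENNReal.ofReal (Real.exp (-lam) * lam ^ n / (Nat.factorial n)))
    (X : ℕ → Ω → A) (hX : ∀ k, Measurable (X k))
    (hXp : ∀ k ℓ, μ {ω | X k ω = ℓ} = ENNReal.ofReal (f ℓ))
    (hXiid : iIndepFun X μ)
    (hMX : IndepFun M (fun ω k => X k ω) μ)
    (ν : A → Ω → ℕ)
    (hν : ∀ ℓ ω, ν ℓ ω = ∑ k ∈ Finset.range (M ω), (if X k ω = ℓ then 1 else 0))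
    (S : Finset A) (m : A → ℕ) :
    μ (⋂ ℓ ∈ S, {ω | ν ℓ ω = m ℓ}) =
      ∏ ℓ ∈ S, ENNReal.ofReal
        (Real.exp (-(lam * f ℓ)) * (lam * f ℓ) ^ m ℓ / (Nat.factorial (m ℓ))) := by
  classical
  -- notation
  set s : ℕ := ∑ ℓ ∈ S, m ℓ with hs_def
  set q : ℝ := 1 - ∑ ℓ ∈ S, f ℓ with hq_def
  have hfS : ∑ ℓ ∈ S, f ℓ ≤ 1 := hf1 ▸ Summable.sum_le_tsum S (fun ℓ _ => hf0 ℓ) hfsum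
  have hfS0 : 0 ≤ ∑ ℓ ∈ S, f ℓ := Finset.sum_nonneg fun ℓ _ => hf0 ℓ
  have hq0 : 0 ≤ q := by simp only [hq_def]; linarith
  -- the classifier
  set cls : A → Option {x // x ∈ S} := fun a => if h : a ∈ S then some ⟨a, h⟩ else none with hcls_def
  have hcls_some : ∀ (a : A) (ℓ : {x // x ∈ S}), cls a = some ℓ ↔ a = ↑ℓ := by
    intro a ℓ
    constructor
    · intro h
      by_cases ha : a ∈ S
      · simp only [hcls_def, dif_pos ha] at h
        exact congrArg Subtype.val (Option.some_injective _ h)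
      · simp [hcls_def, dif_neg ha] at h
    · rintro rfl
      simp [hcls_def, ℓ.2]
  have hcls_none : ∀ a, cls a = none ↔ a ∉ S := by
    intro a
    by_cases ha : a ∈ S
    · simp [hcls_def, dif_pos ha, ha]
    · simp [hcls_def, dif_neg ha, ha]
  -- weights
  set w : Option {x // x ∈ S} → ℝ≥0∞ :=
    fun b => Option.elim b (ENNReal.ofReal q) (fun ℓ => ENNReal.ofReal (f ↑ℓ)) with hw_def
  -- measure of the classifier preimages
  have hclsmeas : ∀ b : Option {x // x ∈ S}, MeasurableSet (cls ⁻¹' {b}) := by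
    intro b
    match b with
    | none =>
        have : cls ⁻¹' {none} = (↑S : Set A)ᶜ := by
          ext a; simp [Set.mem_preimage, hcls_none a]
        rw [this]
        exact (S.finite_toSet.measurableSet).compl
    | some ℓ =>
        have : cls ⁻¹' {some ℓ} = {(↑ℓ : A)} := by
          ext a; simp [Set.mem_preimage, hcls_some a ℓ]
        rw [this]
        exact measurableSet_singleton _
  have hwpre : ∀ (k : ℕ) (b : Option {x // x ∈ S}), μ (X k ⁻¹' (cls ⁻¹' {b})) = w b := by
    intro k b
    match b with
    | some ℓ =>
        have : cls ⁻¹' {some ℓ} = {(↑ℓ : A)} := by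
          ext a; simp [Set.mem_preimage, hcls_some a ℓ]
        rw [this]
        exact hXp k ↑ℓ
    | none =>
        have h1 : cls ⁻¹' {none} = (↑S : Set A)ᶜ := by
          ext a; simp [Set.mem_preimage, hcls_none a]
        rw [h1, Set.preimage_compl]
        have h2 : X k ⁻¹' ↑S = ⋃ ℓ ∈ S, X k ⁻¹' {ℓ} := by
          ext ω; simp
        have h3 : μ (X k ⁻¹' ↑S) = ENNReal.ofReal (∑ ℓ ∈ S, f ℓ) := by
          rw [h2, measure_biUnion_finset ?hd ?hm]
          · rw [ENNReal.ofReal_sum_of_nonneg (fun ℓ _ => hf0 ℓ)]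
            exact Finset.sum_congr rfl fun ℓ _ => hXp k ℓ
          case hd =>
            intro ℓ1 h1' ℓ2 h2' hne
            simp only [Function.onFun]
            apply Set.disjoint_left.mpr
            intro ω hω1 hω2
            simp only [Set.mem_preimage, Set.mem_singleton_iff] at hω1 hω2
            exact hne (hω1 ▸ hω2 ▸ rfl)
          case hm =>
            exact fun ℓ _ => (hX k) (measurableSet_singleton ℓ)
        have h4 : μ (X k ⁻¹' ↑S)ᶜ = 1 - μ (X k ⁻¹' ↑S) := by
          rw [measure_compl ((hX k) S.finite_toSet.measurableSet) (measure_ne_top μ _),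
            measure_univ]
        rw [h4, h3, hw_def]
        simp only [Option.elim]
        rw [← ENNReal.ofReal_one, ← ENNReal.ofReal_sub _ hfS0]
  -- probability of a full coloring pattern
  have hD : ∀ (n : ℕ) (c : Fin n → Option {x // x ∈ S}),
      μ (⋂ k : Fin n, {ω | cls (X (↑k) ω) = c k}) = ∏ k : Fin n, w (c k) := by
    intro n c
    have hsets : ∀ j : ℕ, MeasurableSet
        (if h : j < n then cls ⁻¹' {c ⟨j, h⟩} else Set.univ) := by
      intro j
      by_cases h : j < n
      · rw [dif_pos h]; exact hclsmeas _
      · rw [dif_neg h]; exact MeasurableSet.univ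
    have hiid := hXiid.measure_inter_preimage_eq_mul (Finset.range n)
      (sets := fun j => if h : j < n then cls ⁻¹' {c ⟨j, h⟩} else Set.univ)
      (fun j _ => hsets j)
    have hL : (⋂ j ∈ Finset.range n, X j ⁻¹'
        (if h : j < n then cls ⁻¹' {c ⟨j, h⟩} else Set.univ))
        = ⋂ k : Fin n, {ω | cls (X (↑k) ω) = c k} := by
      ext ω
      simp only [Set.mem_iInter, Finset.mem_range, Set.mem_preimage, Set.mem_setOf_eq]
      constructor
      · intro h k
        have h2 := h ↑k k.isLt
        rw [dif_pos k.isLt] at h2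
        simpa using h2
      · intro h j hj
        rw [dif_pos hj]
        exact h ⟨j, hj⟩
    have hR : (∏ j ∈ Finset.range n, μ (X j ⁻¹'
        (if h : j < n then cls ⁻¹' {c ⟨j, h⟩} else Set.univ)))
        = ∏ k : Fin n, w (c k) := by
      rw [Finset.prod_range fun j => μ (X j ⁻¹'
        (if h : j < n then cls ⁻¹' {c ⟨j, h⟩} else Set.univ))]
      apply Finset.prod_congr rfl
      intro k _
      rw [dif_pos k.isLt]
      have := hwpre ↑k (c ⟨↑k, k.isLt⟩)
      simpa using this
    rw [hL, hR] at hiid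
    exact hiid
  -- counting functions are measurable
  have hcnt : ∀ (n : ℕ) (ℓ : A), Measurable
      (fun ω => ∑ k ∈ Finset.range n, if X k ω = ℓ then 1 else 0 : Ω → ℕ) := by
    intro n ℓ
    apply Finset.measurable_sum
    intro k _
    exact Measurable.ite ((hX k) (measurableSet_singleton ℓ)) measurable_const measurable_const
  set Cn : ℕ → Set Ω := fun n =>
    ⋂ ℓ ∈ S, {ω | (∑ k ∈ Finset.range n, if X k ω = ℓ then 1 else 0) = m ℓ} with hCn_def
  have hCnmeas : ∀ n, MeasurableSet (Cn n) := by
    intro n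
    apply MeasurableSet.biInter S.countable_toSet
    intro ℓ _
    exact (hcnt n ℓ) (measurableSet_singleton (m ℓ))
  have hMmeas : ∀ n : ℕ, MeasurableSet {ω | M ω = n} :=
    fun n => hM (measurableSet_singleton n)
  have hE : (⋂ ℓ ∈ S, {ω | ν ℓ ω = m ℓ}) = ⋃ n, ({ω | M ω = n} ∩ Cn n) := by
    ext ω
    simp only [Set.mem_iInter, Set.mem_iUnion, Set.mem_inter_iff, Set.mem_setOf_eq, hCn_def]
    constructor
    · intro h
      exact ⟨M ω, rfl, fun ℓ hℓ => by rw [← hν ℓ ω]; exact h ℓ hℓ⟩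
    · rintro ⟨n, hn, hc⟩ ℓ hℓ
      rw [hν ℓ ω, hn]
      exact hc ℓ hℓ
  have hsplit : μ (⋂ ℓ ∈ S, {ω | ν ℓ ω = m ℓ})
      = ∑' n : ℕ, μ ({ω | M ω = n} ∩ Cn n) := by
    rw [hE]
    apply measure_iUnion
    · intro n1 n2 hne
      simp only [Function.onFun]
      apply Set.disjoint_left.mpr
      rintro ω ⟨h1, -⟩ ⟨h2, -⟩
      exact hne (h1 ▸ h2 ▸ rfl)
    · exact fun n => (hMmeas n).inter (hCnmeas n)
  -- the value of each term
  set mh : ℕ → Option {x // x ∈ S} → ℕ :=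
    fun n b => Option.elim b (n - s) (fun ℓ => m ↑ℓ) with hmh_def
  set a : ℕ → ℝ := fun n => if s ≤ n then
      Real.exp (-lam) * lam ^ n / (Nat.factorial n) *
        ((Nat.multinomial Finset.univ (mh n) : ℝ) *
          ((∏ ℓ ∈ S, f ℓ ^ m ℓ) * q ^ (n - s))) else 0 with ha_def
  have hterm : ∀ n : ℕ, μ ({ω | M ω = n} ∩ Cn n) = ENNReal.ofReal (a n) := by
    intro n
    -- independence of M and the X-based event
    have hindep : μ ({ω | M ω = n} ∩ Cn n) = μ {ω | M ω = n} * μ (Cn n) := by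
      set T : Set (ℕ → A) := {y : ℕ → A |
        ∀ ℓ ∈ S, (∑ k ∈ Finset.range n, if y k = ℓ then 1 else 0) = m ℓ} with hT_def
      have hTmeas : MeasurableSet T := by
        have hT2 : T = ⋂ ℓ ∈ S,
            (fun y : ℕ → A => ∑ k ∈ Finset.range n, if y k = ℓ then 1 else 0) ⁻¹' {m ℓ} := by
          ext y
          simp [hT_def, Set.mem_iInter]
        rw [hT2]
        apply MeasurableSet.biInter S.countable_toSet
        intro ℓ _
        have hmeassum : Measurable
            (fun y : ℕ → A => ∑ k ∈ Finset.range n, if y k = ℓ then 1 else 0) := by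
          apply Finset.measurable_sum
          intro k _
          exact (Measurable.ite (measurableSet_eq (a := ℓ)) measurable_const
            measurable_const).comp (measurable_pi_apply k)
        exact hmeassum (measurableSet_singleton (m ℓ))
      have hCnT : Cn n = (fun ω k => X k ω) ⁻¹' T := by
        ext ω
        simp [hCn_def, hT_def, Set.mem_iInter]
      have := hMX.measure_inter_preimage_eq_mul {n} T (measurableSet_singleton n) hTmeas
      rw [hCnT]
      exact this
    rw [hindep]
    by_cases hsn : s ≤ n
    · -- main case
      -- the finset of admissible colorings
      set F : Finset (Fin n → Option {x // x ∈ S}) := Finset.univ.filter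
        (fun c => ∀ b, (∑ k, if c k = b then 1 else 0) = mh n b) with hF_def
      -- total count over all classes
      have htotal : ∀ c : Fin n → Option {x // x ∈ S},
          ∑ b, (∑ k : Fin n, if c k = b then 1 else 0) = n := by
        intro c
        rw [Finset.sum_comm]
        simp [Finset.sum_ite_eq]
      have hsum_mh : ∑ b, mh n b = n := by
        rw [Fintype.sum_option]
        simp only [hmh_def, Option.elim]
        rw [Finset.sum_coe_sort S (fun ℓ => m ℓ)]
        have hseta : S.sum m = s := rfl
        omega
      -- decomposition of Cn into colorings
      have hCnF : Cn n = ⋃ c ∈ F, (⋂ k : Fin n, {ω | cls (X (↑k) ω) = c k}) := by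
        ext ω
        simp only [Set.mem_iUnion, Set.mem_iInter, Set.mem_setOf_eq, hCn_def, hF_def,
          Finset.mem_filter, Finset.mem_univ, true_and]
        constructor
        · intro h
          refine ⟨fun k => cls (X (↑k) ω), ?_, fun k => rfl⟩
          have hsome : ∀ ℓ : {x // x ∈ S},
              (∑ k : Fin n, if cls (X (↑k) ω) = some ℓ then 1 else 0) = m ↑ℓ := by
            intro ℓ
            have heach : ∀ k : Fin n, (if cls (X (↑k) ω) = some ℓ then 1 else 0)
                = (if X (↑k) ω = ↑ℓ then (1:ℕ) else 0) := by
              intro k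
              by_cases hk : X (↑k) ω = ↑ℓ
              · rw [if_pos hk, if_pos ((hcls_some _ ℓ).mpr hk)]
              · rw [if_neg hk, if_neg (fun hc => hk ((hcls_some _ ℓ).mp hc))]
            rw [Finset.sum_congr rfl (fun k _ => heach k),
              Fin.sum_univ_eq_sum_range (fun k => if X k ω = ↑ℓ then 1 else 0) n]
            exact h ↑ℓ ℓ.2
          intro b
          match b with
          | some ℓ => simpa [hmh_def] using hsome ℓ
          | none =>
              have h1 := htotal (fun k => cls (X (↑k) ω))
              rw [Fintype.sum_option] at h1
              rw [Finset.sum_congr rfl (fun ℓ _ => hsome ℓ)] at h1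
              have h2 : ∑ ℓ : {x // x ∈ S}, m ↑ℓ = s :=
                Finset.sum_coe_sort S (fun ℓ => m ℓ)
              simp only [hmh_def, Option.elim]
              have hseta : S.sum m = ∑ ℓ ∈ S, m ℓ := rfl
              omega
        · rintro ⟨c, hcF, hc⟩ ℓ hℓ
          rw [← Fin.sum_univ_eq_sum_range (fun k => if X k ω = ℓ then 1 else 0) n]
          have hcb := hcF (some ⟨ℓ, hℓ⟩)
          simp only [hmh_def, Option.elim] at hcb
          rw [← hcb]
          apply Finset.sum_congr rfl
          intro k _
          rw [← hc k]
          by_cases hk : X (↑k) ω = ℓ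
          · rw [if_pos hk, if_pos ((hcls_some _ ⟨ℓ, hℓ⟩).mpr hk)]
          · rw [if_neg hk, if_neg (fun hcc => hk ((hcls_some _ ⟨ℓ, hℓ⟩).mp hcc))]
      -- measure of the decomposition
      have hCnval : μ (Cn n) = ∑ c ∈ F, μ (⋂ k : Fin n, {ω | cls (X (↑k) ω) = c k}) := by
        rw [hCnF]
        apply measure_biUnion_finset
        · intro c1 h1 c2 h2 hne
          simp only [Function.onFun]
          apply Set.disjoint_left.mpr
          intro ω hω1 hω2
          simp only [Set.mem_iInter, Set.mem_setOf_eq] at hω1 hω2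
          exact hne (funext fun k => (hω1 k).symm.trans (hω2 k))
        · intro c _
          apply MeasurableSet.iInter
          intro k
          exact (hX ↑k) (hclsmeas (c k))
      -- value of each coloring probability
      have hgroup : ∀ c : Fin n → Option {x // x ∈ S},
          (∏ k : Fin n, w (c k)) =
            ∏ b, w b ^ (∑ k : Fin n, if c k = b then 1 else 0) := by
        intro c
        rw [← Finset.prod_fiberwise_of_maps_to (fun k _ => Finset.mem_univ (c k))
          (fun k => w (c k))]
        apply Finset.prod_congr rfl
        intro b _
        rw [Finset.prod_congr rfl (fun k hk => by rw [(Finset.mem_filter.mp hk).2]),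
          Finset.prod_const, Finset.card_filter]
      have hwprod : (∏ b, w b ^ mh n b)
          = ENNReal.ofReal ((∏ ℓ ∈ S, f ℓ ^ m ℓ) * q ^ (n - s)) := by
        rw [Fintype.prod_option]
        simp only [hw_def, hmh_def, Option.elim]
        have h1 : ∏ ℓ : {x // x ∈ S}, ENNReal.ofReal (f ↑ℓ) ^ m ↑ℓ
            = ENNReal.ofReal (∏ ℓ ∈ S, f ℓ ^ m ℓ) := by
          calc ∏ ℓ : {x // x ∈ S}, ENNReal.ofReal (f ↑ℓ) ^ m ↑ℓ
              = ∏ ℓ ∈ S, ENNReal.ofReal (f ℓ) ^ m ℓ :=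
                Finset.prod_coe_sort S (fun ℓ => ENNReal.ofReal (f ℓ) ^ m ℓ)
            _ = ∏ ℓ ∈ S, ENNReal.ofReal (f ℓ ^ m ℓ) :=
                Finset.prod_congr rfl (fun ℓ _ => (ENNReal.ofReal_pow (hf0 ℓ) (m ℓ)).symm)
            _ = ENNReal.ofReal (∏ ℓ ∈ S, f ℓ ^ m ℓ) :=
                (ENNReal.ofReal_prod_of_nonneg (fun ℓ _ => pow_nonneg (hf0 ℓ) (m ℓ))).symm
        rw [h1, ← ENNReal.ofReal_pow hq0, ← ENNReal.ofReal_mul (pow_nonneg hq0 _)]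
        rw [mul_comm]
      have hDval : ∀ c ∈ F, μ (⋂ k : Fin n, {ω | cls (X (↑k) ω) = c k})
          = ENNReal.ofReal ((∏ ℓ ∈ S, f ℓ ^ m ℓ) * q ^ (n - s)) := by
        intro c hcF
        rw [hD n c, hgroup c, ← hwprod]
        apply Finset.prod_congr rfl
        intro b _
        rw [Finset.mem_filter] at hcF
        rw [hcF.2 b]
      -- count the colorings
      have hFcard : F.card = Nat.multinomial Finset.univ (mh n) :=
        count_colorings n (mh n) hsum_mh
      rw [hCnval, Finset.sum_congr rfl hDval, Finset.sum_const, hFcard, nsmul_eq_mul]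
      rw [hMn n]
      simp only [ha_def]
      rw [if_pos hsn]
      rw [ENNReal.ofReal_mul (show (0:ℝ) ≤ Real.exp (-lam) * lam ^ n / (Nat.factorial n) by positivity),
        ENNReal.ofReal_mul (Nat.cast_nonneg _), ENNReal.ofReal_natCast]
    · -- degenerate case : Cn n is empty
      have hempty : Cn n = ∅ := by
        rw [Set.eq_empty_iff_forall_notMem]
        intro ω hω
        simp only [hCn_def, Set.mem_iInter, Set.mem_setOf_eq] at hω
        have hle : ∑ ℓ ∈ S, (∑ k ∈ Finset.range n, if X k ω = ℓ then 1 else 0) ≤ n := by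
          rw [Finset.sum_comm]
          calc ∑ k ∈ Finset.range n, ∑ ℓ ∈ S, (if X k ω = ℓ then 1 else 0)
              ≤ ∑ k ∈ Finset.range n, 1 := by
                apply Finset.sum_le_sum
                intro k _
                rw [Finset.sum_ite_eq S (X k ω) (fun _ => 1)]
                split <;> omega
            _ = n := by simp
        rw [Finset.sum_congr rfl (fun ℓ hℓ => hω ℓ hℓ)] at hle
        have hseta : S.sum m = ∑ ℓ ∈ S, m ℓ := rfl
        omega
      rw [hempty, measure_empty, mul_zero]
      simp only [ha_def]
      rw [if_neg hsn, ENNReal.ofReal_zero]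
  -- the closed form of the series
  set C : ℝ := Real.exp (-lam) * ∏ ℓ ∈ S, ((lam * f ℓ) ^ m ℓ / (Nat.factorial (m ℓ))) with hC_def
  have ha_shift : ∀ i : ℕ, a (i + s) = C * ((lam * q) ^ i / (Nat.factorial i)) := by
    intro i
    have hsle : s ≤ i + s := Nat.le_add_left s i
    simp only [ha_def]
    rw [if_pos hsle]
    have hns : i + s - s = i := by omega
    rw [hns]
    have hmh_sum : ∑ b, mh (i + s) b = i + s := by
      rw [Fintype.sum_option]
      simp only [hmh_def, Option.elim, hns]
      rw [Finset.sum_coe_sort S (fun ℓ => m ℓ)]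
    have hmh_prod : (∏ b, Nat.factorial (mh (i+s) b))
        = Nat.factorial i * ∏ ℓ ∈ S, Nat.factorial (m ℓ) := by
      rw [Fintype.prod_option]
      simp only [hmh_def, Option.elim, hns]
      rw [Finset.prod_coe_sort S (fun ℓ => Nat.factorial (m ℓ))]
    have hspec := Nat.multinomial_spec (Finset.univ) (mh (i+s))
    rw [hmh_prod, hmh_sum] at hspec
    have hPpos : (0:ℝ) < (Nat.factorial i : ℝ) * ∏ ℓ ∈ S, (Nat.factorial (m ℓ) : ℝ) := by
      apply mul_pos
      · exact_mod_cast Nat.cast_pos.mpr (Nat.factorial_pos i)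
      · apply Finset.prod_pos
        intro ℓ _
        exact_mod_cast Nat.cast_pos.mpr (Nat.factorial_pos (m ℓ))
    have hcast : ((Nat.multinomial Finset.univ (mh (i+s))) : ℝ) =
        (Nat.factorial (i+s) : ℝ) /
          ((Nat.factorial i : ℝ) * ∏ ℓ ∈ S, (Nat.factorial (m ℓ) : ℝ)) := by
      rw [eq_div_iff (ne_of_gt hPpos)]
      have hc := congrArg (Nat.cast (R := ℝ)) hspec
      push_cast at hc
      linarith [hc]
    rw [hcast]
    have hprod_split : ∏ ℓ ∈ S, ((lam * f ℓ) ^ m ℓ / (Nat.factorial (m ℓ) : ℝ))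
        = (lam ^ s * ∏ ℓ ∈ S, f ℓ ^ m ℓ) / ∏ ℓ ∈ S, (Nat.factorial (m ℓ) : ℝ) := by
      rw [Finset.prod_div_distrib]
      congr 1
      rw [Finset.prod_congr rfl (fun ℓ (_ : ℓ ∈ S) => mul_pow lam (f ℓ) (m ℓ)),
        Finset.prod_mul_distrib, Finset.prod_pow_eq_pow_sum]
    have h1 : (Nat.factorial (i+s) : ℝ) ≠ 0 := by positivity
    have h2 : (Nat.factorial i : ℝ) ≠ 0 := by positivity
    have h3 : (∏ ℓ ∈ S, (Nat.factorial (m ℓ):ℝ)) ≠ 0 := by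
      apply ne_of_gt
      apply Finset.prod_pos
      intro ℓ _
      exact_mod_cast Nat.cast_pos.mpr (Nat.factorial_pos (m ℓ))
    rw [hC_def, hprod_split, mul_pow, pow_add]
    field_simp
  have hsummable_shift : Summable (fun i => a (i + s)) := by
    have heq : (fun i => a (i + s)) = fun i => C * ((lam*q)^i / (Nat.factorial i)) :=
      funext ha_shift
    rw [heq]
    exact (Real.summable_pow_div_factorial (lam*q)).mul_left C
  have hsummable : Summable a := (summable_nat_add_iff s).mp hsummable_shift
  have ha_nonneg : ∀ n, 0 ≤ a n := by
    intro n
    simp only [ha_def]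
    split
    · apply mul_nonneg (by positivity)
      apply mul_nonneg (Nat.cast_nonneg _)
      exact mul_nonneg (Finset.prod_nonneg (fun ℓ _ => pow_nonneg (hf0 ℓ) _))
        (pow_nonneg hq0 _)
    · exact le_refl 0
  have htsum : ∑' n, a n = ∏ ℓ ∈ S,
      (Real.exp (-(lam * f ℓ)) * (lam * f ℓ) ^ m ℓ / (Nat.factorial (m ℓ))) := by
    rw [← Summable.sum_add_tsum_nat_add s hsummable]
    have hzero : ∑ n ∈ Finset.range s, a n = 0 := by
      apply Finset.sum_eq_zero
      intro n hn
      rw [Finset.mem_range] at hn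
      simp only [ha_def]
      rw [if_neg (by omega)]
    rw [hzero, zero_add]
    rw [show (∑' i : ℕ, a (i+s)) = ∑' i : ℕ, C * ((lam*q)^i / (Nat.factorial i)) from
      tsum_congr ha_shift]
    rw [tsum_mul_left]
    have hexp : ∑' i : ℕ, ((lam*q)^i / (Nat.factorial i : ℝ)) = Real.exp (lam * q) := by
      rw [Real.exp_eq_exp_ℝ]
      exact (NormedSpace.expSeries_div_hasSum_exp (lam*q)).tsum_eq
    rw [hexp, hC_def]
    rw [Finset.prod_congr rfl (fun ℓ (_ : ℓ ∈ S) => mul_div_assoc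
      (Real.exp (-(lam * f ℓ))) ((lam * f ℓ) ^ m ℓ) ((Nat.factorial (m ℓ)):ℝ))]
    rw [Finset.prod_mul_distrib]
    have hexp2 : ∏ ℓ ∈ S, Real.exp (-(lam * f ℓ))
        = Real.exp (-(lam * ∑ ℓ ∈ S, f ℓ)) := by
      rw [← Real.exp_sum]
      congr 1
      rw [Finset.mul_sum, ← Finset.sum_neg_distrib]
    rw [hexp2]
    have hcomb : Real.exp (-lam) * Real.exp (lam * q)
        = Real.exp (-(lam * ∑ ℓ ∈ S, f ℓ)) := by
      rw [← Real.exp_add]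
      congr 1
      simp only [hq_def]
      ring
    rw [mul_right_comm, hcomb]
  rw [hsplit]
  rw [show (∑' n : ℕ, μ ({ω | M ω = n} ∩ Cn n)) = ∑' n : ℕ, ENNReal.ofReal (a n) from
    tsum_congr hterm]
  rw [← ENNReal.ofReal_tsum_of_nonneg ha_nonneg hsummable, htsum]
  exact ENNReal.ofReal_prod_of_nonneg (fun ℓ _ => div_nonneg
    (mul_nonneg (Real.exp_nonneg _) (pow_nonneg (mul_nonneg hlam (hf0 ℓ)) _))
    (Nat.cast_nonneg _))

/-- **Poisson splitting/thinning.** In the occupancy model, if the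
number of balls `M` is Poisson distributed with parameter `λ ≥ 0`, then the family
of occupancy multiplicities `(ν_ℓ)_{ℓ ∈ A}` is mutually independent and each `ν_ℓ`
is Poisson distributed with parameter `λ f ℓ`. -/
theorem occupancy_poisson_splitting
    {Ω A : Type*} [MeasurableSpace Ω] [MeasurableSpace A]
    [MeasurableSingletonClass A] [Countable A] [DecidableEq A]
    (μ : Measure Ω) [IsProbabilityMeasure μ]
    (f : A → ℝ) (hf0 : ∀ ℓ, 0 ≤ f ℓ) (hf1 : ∑' ℓ, f ℓ = 1)
    (M : Ω → ℕ) (hM : Measurable M)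
    (lam : ℝ) (hlam : 0 ≤ lam)
    (hMpois : ∀ m : ℕ, (μ {ω | M ω = m}).toReal
        = Real.exp (-lam) * lam ^ m / (Nat.factorial m))
    (X : ℕ → Ω → A) (hX : ∀ k, Measurable (X k))
    (hXdist : ∀ k ℓ, (μ {ω | X k ω = ℓ}).toReal = f ℓ)
    (hXiid : iIndepFun X μ)
    (hMX : IndepFun M (fun ω k => X k ω) μ)
    (ν : A → Ω → ℕ)
    (hν : ∀ ℓ ω, ν ℓ ω = ∑ k ∈ Finset.range (M ω), (if X k ω = ℓ then 1 else 0)) :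
    iIndepFun ν μ ∧
    ∀ ℓ, ∀ m : ℕ, (μ {ω | ν ℓ ω = m}).toReal
        = Real.exp (-(lam * f ℓ)) * (lam * f ℓ) ^ m / (Nat.factorial m) := by
  classical
  have hfsum : Summable f := by
    by_contra h
    rw [tsum_eq_zero_of_not_summable h] at hf1
    exact one_ne_zero hf1.symm
  have hXp : ∀ k ℓ, μ {ω | X k ω = ℓ} = ENNReal.ofReal (f ℓ) := by
    intro k ℓ
    rw [← hXdist k ℓ, ENNReal.ofReal_toReal (measure_ne_top μ _)]
  have hMn : ∀ n : ℕ, μ {ω | M ω = n}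
      = ENNReal.ofReal (Real.exp (-lam) * lam ^ n / (Nat.factorial n)) := by
    intro n
    rw [← hMpois n, ENNReal.ofReal_toReal (measure_ne_top μ _)]
  have key := occupancy_key μ f hf0 hfsum hf1 M hM lam hlam hMn X hX hXp hXiid hMX ν hν
  have hsingle : ∀ (ℓ : A) (mm : ℕ), μ {ω | ν ℓ ω = mm} =
      ENNReal.ofReal (Real.exp (-(lam * f ℓ)) * (lam * f ℓ) ^ mm / (Nat.factorial mm)) := by
    intro ℓ mm
    have h := key {ℓ} (fun _ => mm)
    simpa using h
  -- measurability of each ν ℓ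
  have hcnt : ∀ (n : ℕ) (ℓ : A), Measurable
      (fun ω => ∑ k ∈ Finset.range n, if X k ω = ℓ then 1 else 0 : Ω → ℕ) := by
    intro n ℓ
    apply Finset.measurable_sum
    intro k _
    exact Measurable.ite ((hX k) (measurableSet_singleton ℓ)) measurable_const measurable_const
  have hνmeas : ∀ ℓ, Measurable (ν ℓ) := by
    intro ℓ
    apply measurable_to_countable'
    intro y
    have hy : ν ℓ ⁻¹' {y} = ⋃ n, ({ω | M ω = n} ∩
        {ω | (∑ k ∈ Finset.range n, if X k ω = ℓ then 1 else 0) = y}) := by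
      ext ω
      simp only [Set.mem_preimage, Set.mem_singleton_iff, Set.mem_iUnion, Set.mem_inter_iff,
        Set.mem_setOf_eq]
      constructor
      · intro h
        exact ⟨M ω, rfl, by rw [← hν ℓ ω]; exact h⟩
      · rintro ⟨n, hn, hc⟩
        rw [hν ℓ ω, hn]
        exact hc
    rw [hy]
    exact MeasurableSet.iUnion fun n => (hM (measurableSet_singleton n)).inter
      ((hcnt n ℓ) (measurableSet_singleton y))
  constructor
  · -- mutual independence
    rw [iIndepFun_iff_iIndep]
    apply ProbabilityTheory.iIndepSets.iIndep
      (π := fun ℓ => {sset | ∃ j : ℕ, sset = ν ℓ ⁻¹' {j}})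
    · exact fun ℓ => (hνmeas ℓ).comap_le
    · intro ℓ
      rintro s1 ⟨j1, rfl⟩ s2 ⟨j2, rfl⟩ hne
      rcases eq_or_ne j1 j2 with rfl | hj
      · rw [Set.inter_self]
        exact ⟨j1, rfl⟩
      · exfalso
        obtain ⟨ω, h1, h2⟩ := hne
        exact hj (h1.symm.trans h2)
    · intro ℓ
      apply le_antisymm
      · rintro s ⟨t, -, rfl⟩
        have ht : ν ℓ ⁻¹' t = ⋃ j ∈ t, ν ℓ ⁻¹' {j} := by
          ext ω; simp
        rw [ht]
        exact MeasurableSet.biUnion t.to_countable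
          (fun j _ => MeasurableSpace.measurableSet_generateFrom ⟨j, rfl⟩)
      · apply MeasurableSpace.generateFrom_le
        rintro sset ⟨j, rfl⟩
        exact ⟨{j}, trivial, rfl⟩
    · rw [iIndepSets_iff]
      intro s sets hsets
      set j : A → ℕ := fun ℓ =>
        if h : ∃ jj : ℕ, sets ℓ = ν ℓ ⁻¹' {jj} then h.choose else 0 with hj_def
      have hjspec : ∀ ℓ ∈ s, sets ℓ = ν ℓ ⁻¹' {j ℓ} := by
        intro ℓ hℓ
        have hex : ∃ jj : ℕ, sets ℓ = ν ℓ ⁻¹' {jj} := hsets ℓ hℓ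
        simp only [hj_def]
        rw [dif_pos hex]
        exact hex.choose_spec
      have h1 : (⋂ ℓ ∈ s, sets ℓ) = ⋂ ℓ ∈ s, {ω | ν ℓ ω = j ℓ} := by
        apply Set.iInter₂_congr
        intro ℓ hℓ
        rw [hjspec ℓ hℓ]
        rfl
      rw [h1, key s j]
      apply Finset.prod_congr rfl
      intro ℓ hℓ
      rw [hjspec ℓ hℓ]
      exact (hsingle ℓ (j ℓ)).symm
  · -- marginal distributions
    intro ℓ mm
    rw [hsingle ℓ mm, ENNReal.toReal_ofReal (div_nonneg
      (mul_nonneg (Real.exp_nonneg _) (pow_nonneg (mul_nonneg hlam (hf0 ℓ)) _))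
      (Nat.cast_nonneg _))]
end

section
/- Let g : ℕ → ℝ satisfy g_m ≥ 0 for all m and Σ_{m≥0} g_m = 1, and let G(s) = Σ_{m≥0} g_m s^m for s ∈ [−1, 1]. If G satisfies the functional equation G(1 − 2t) = G(1 − t)² for all t ∈ [0, 1/2], then there exists λ ≥ 0 such that g_m = e^{−λ} λ^m / m! for all m, i.e. G is the probability generating function of a Poisson distribution. -/
open Filter Topology
set_option maxHeartbeats 1000000


/-- exp as tsum -/
lemma my_exp_tsum (x : ℝ) : Real.exp x = ∑' n : ℕ, x ^ n / n.factorial := by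
  rw [Real.exp_eq_exp_ℝ, NormedSpace.exp_eq_tsum_div]

/-- coefficient uniqueness -/
lemma coeff_unique (d : ℕ → ℝ) (hd : Summable (fun m => |d m|))
    (h : ∀ s ∈ Set.Ioc (0:ℝ) 1, ∑' m : ℕ, d m * s ^ m = 0) : ∀ m, d m = 0 := by
  intro m
  induction m using Nat.strong_induction_on with
  | _ m ih =>
    set C := ∑' k, |d k| with hC
    have hCn : 0 ≤ C := tsum_nonneg (fun k => abs_nonneg _)
    have hds : Summable d := hd.of_abs
    -- key bound : |d m| ≤ s * C for all s ∈ (0,1]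
    have key : ∀ s ∈ Set.Ioc (0:ℝ) 1, |d m| ≤ s * C := by
      intro s hs
      obtain ⟨hs0, hs1⟩ := hs
      have hsum : Summable (fun k => d k * s ^ k) := by
        apply Summable.of_abs
        apply hd.of_nonneg_of_le (fun k => abs_nonneg _)
        intro k
        rw [abs_mul, abs_pow, abs_of_nonneg hs0.le]
        exact mul_le_of_le_one_right (abs_nonneg _) (pow_le_one₀ hs0.le hs1)
      have h0 := h s ⟨hs0, hs1⟩
      have hsplit := (Summable.sum_add_tsum_nat_add m hsum).symm
      rw [h0] at hsplit
      have hzero : ∀ k ∈ Finset.range m, d k * s ^ k = 0 := by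
        intro k hk
        rw [ih k (Finset.mem_range.mp hk), zero_mul]
      rw [Finset.sum_eq_zero hzero, zero_add] at hsplit
      -- hsplit : ∑' i, d (i + m) * s ^ (i+m) = 0
      have htail : Summable (fun i => d (i + m) * s ^ (i + m)) := hsum.comp_injective (add_left_injective m)
      have h1 := Summable.tsum_eq_zero_add htail
      rw [← hsplit] at h1
      simp only [zero_add] at h1
      -- 0 = d m * s^m + ∑' i, d (i+1+m) * s^(i+1+m)
      have h2 : d m * s ^ m = - ∑' i : ℕ, d (i + 1 + m) * s ^ (i + 1 + m) := by linarith
      have hinj : Function.Injective (fun i : ℕ => i + 1 + m) := by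
        intro a b hab; simp only at hab; omega
      have hdd : Summable (fun i => |d (i + 1 + m)|) := hd.comp_injective hinj
      have hterm : Summable (fun i => |d (i + 1 + m) * s ^ (i + 1 + m)|) := by
        apply hdd.of_nonneg_of_le (fun k => abs_nonneg _)
        intro k
        rw [abs_mul, abs_pow, abs_of_nonneg hs0.le]
        exact mul_le_of_le_one_right (abs_nonneg _) (pow_le_one₀ hs0.le hs1)
      have habs : |d m * s ^ m| ≤ s ^ m * (s * C) := by
        rw [h2, abs_neg]
        calc |∑' i : ℕ, d (i + 1 + m) * s ^ (i + 1 + m)|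
            ≤ ∑' i : ℕ, |d (i + 1 + m) * s ^ (i + 1 + m)| := by
              exact norm_tsum_le_tsum_norm (f := fun i => d (i + 1 + m) * s ^ (i + 1 + m)) (by simpa only [Real.norm_eq_abs] using hterm) |>.trans_eq (by simp only [Real.norm_eq_abs])
          _ ≤ ∑' i : ℕ, |d (i + 1 + m)| * (s ^ m * s) := by
              apply Summable.tsum_le_tsum
              · intro i
                rw [abs_mul, abs_pow, abs_of_nonneg hs0.le]
                apply mul_le_mul_of_nonneg_left _ (abs_nonneg _)
                calc s ^ (i + 1 + m) ≤ s ^ (1 + m) := by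
                      apply pow_le_pow_of_le_one hs0.le hs1; omega
                  _ = s ^ m * s := by ring
              · exact hterm
              · exact Summable.mul_right _ hdd
          _ = (∑' i : ℕ, |d (i + 1 + m)|) * (s ^ m * s) := by rw [tsum_mul_right]
          _ ≤ C * (s ^ m * s) := by
              apply mul_le_mul_of_nonneg_right _ (by positivity)
              calc (∑' i : ℕ, |d (i + 1 + m)|) ≤ ∑' i, |d i| :=
                    tsum_comp_le_tsum_of_inj hd (fun k => abs_nonneg _) hinj
                _ = C := rfl
          _ = s ^ m * (s * C) := by ring
      rw [abs_mul, abs_pow, abs_of_nonneg hs0.le] at habs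
      have : (0:ℝ) < s ^ m := by positivity
      rw [mul_comm] at habs
      exact le_of_mul_le_mul_left habs this
  -- conclude
    by_contra hne
    have hpos : 0 < |d m| := abs_pos.mpr hne
    obtain ⟨s, hs0, hs1, hlt⟩ : ∃ s : ℝ, 0 < s ∧ s ≤ 1 ∧ s * C < |d m| := by
      rcases eq_or_lt_of_le hCn with hC0 | hC0
      · exact ⟨1, one_pos, le_refl 1, by rw [← hC0]; simpa using hpos⟩
      · refine ⟨min 1 (|d m| / (2 * C)), ?_, min_le_left _ _, ?_⟩
        · positivity
        · calc min 1 (|d m| / (2 * C)) * C ≤ |d m| / (2 * C) * C := by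
                apply mul_le_mul_of_nonneg_right (min_le_right _ _) hCn
            _ = |d m| / 2 := by field_simp
            _ < |d m| := by linarith
    exact absurd (key s ⟨hs0, hs1⟩) (not_le.mpr hlt)


lemma slope_pow_tendsto (m : ℕ) :
    Filter.Tendsto (fun u : ℝ => (1 - (1 - u) ^ m) / u) (𝓝[≠] 0) (𝓝 m) := by
  have h1 : HasDerivAt (fun x : ℝ => 1 - x) (-1) 0 := (hasDerivAt_id 0).const_sub 1
  have h2 : HasDerivAt (fun x : ℝ => (1 - x) ^ m) ((m : ℝ) * (1 - 0) ^ (m - 1) * (-1)) 0 :=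
    h1.pow m
  have h3 : HasDerivAt (fun x : ℝ => 1 - (1 - x) ^ m) ((m : ℝ)) 0 := by
    have := h2.const_sub 1
    simpa using this
  have h4 := hasDerivAt_iff_tendsto_slope.mp h3
  apply h4.congr'
  filter_upwards [] with u
  simp [slope_def_field]

/-- If the probability generating function `G (s) = ∑ g m * s ^ m`
of a probability mass function `g` on `ℕ` satisfies `G (1 - 2 t) = G (1 - t) ^ 2`
for all `t ∈ [0, 1/2]`, then `g` is a Poisson distribution: there is `λ ≥ 0` with
`g m = exp (-λ) * λ ^ m / m!` for all `m`. -/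
theorem pgf_functional_equation_poisson
    (g : ℕ → ℝ) (hg0 : ∀ m, 0 ≤ g m) (hg1 : ∑' m, g m = 1)
    (G : ℝ → ℝ) (hG : ∀ s ∈ Set.Icc (-1 : ℝ) 1, G s = ∑' m : ℕ, g m * s ^ m)
    (hfe : ∀ t ∈ Set.Icc (0 : ℝ) (1 / 2), G (1 - 2 * t) = (G (1 - t)) ^ 2) :
    ∃ lam : ℝ, 0 ≤ lam ∧ ∀ m : ℕ, g m = Real.exp (-lam) * lam ^ m / (Nat.factorial m) := by
  -- summability of g
  have hgsum : Summable g := by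
    by_contra h
    rw [tsum_eq_zero_of_not_summable h] at hg1
    norm_num at hg1
  -- summability of terms
  have hterm : ∀ s : ℝ, s ∈ Set.Icc (0:ℝ) 1 → Summable (fun m : ℕ => g m * s ^ m) := by
    intro s hs
    apply hgsum.of_nonneg_of_le
    · intro m; exact mul_nonneg (hg0 m) (pow_nonneg hs.1 m)
    · intro m; exact mul_le_of_le_one_right (hg0 m) (pow_le_one₀ hs.1 hs.2)
  have hGval : ∀ s ∈ Set.Icc (0:ℝ) 1, G s = ∑' m : ℕ, g m * s ^ m := by
    intro s hs; exact hG s ⟨by linarith [hs.1], hs.2⟩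
  -- G 1 = 1
  have hG1 : G 1 = 1 := by
    rw [hGval 1 ⟨zero_le_one, le_refl 1⟩]
    simpa using hg1
  -- G ≤ 1 on [0,1]
  have hGle : ∀ s ∈ Set.Icc (0:ℝ) 1, G s ≤ 1 := by
    intro s hs
    rw [hGval s hs, ← hg1]
    apply Summable.tsum_le_tsum _ (hterm s hs) hgsum
    intro m; exact mul_le_of_le_one_right (hg0 m) (pow_le_one₀ hs.1 hs.2)
  -- positivity on (0,1]
  have hex : ∃ m, 0 < g m := by
    by_contra h
    push_neg at h
    have : ∀ m, g m = 0 := fun m => le_antisymm (h m) (hg0 m)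
    rw [tsum_congr this] at hg1
    simp at hg1
  have hGpos' : ∀ s ∈ Set.Ioc (0:ℝ) 1, 0 < G s := by
    intro s hs
    obtain ⟨m, hm⟩ := hex
    rw [hGval s ⟨hs.1.le, hs.2⟩]
    exact Summable.tsum_pos (hterm s ⟨hs.1.le, hs.2⟩)
      (fun k => mul_nonneg (hg0 k) (pow_nonneg hs.1.le k)) m
      (mul_pos hm (pow_pos hs.1 m))
  have hGpos : ∀ s ∈ Set.Icc (0:ℝ) 1, 0 < G s := by
    intro s hs
    rcases eq_or_lt_of_le hs.1 with h0 | h0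
    · have h12 := hfe (1/2) ⟨by norm_num, le_refl _⟩
      norm_num at h12
      rw [← h0, h12]
      have := hGpos' (1/2) ⟨by norm_num, by norm_num⟩
      positivity
    · exact hGpos' s ⟨h0, hs.2⟩
  -- iteration of the functional equation
  have hstep : ∀ t ∈ Set.Icc (0:ℝ) 1, G (1 - t) = (G (1 - t / 2)) ^ 2 := by
    intro t ht
    have := hfe (t / 2) ⟨by linarith [ht.1], by linarith [ht.2]⟩
    rw [show 1 - 2 * (t / 2) = 1 - t by ring] at this
    exact this
  have hiter : ∀ t ∈ Set.Icc (0:ℝ) 1, ∀ n : ℕ,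
      Real.log (G (1 - t)) = 2 ^ n * Real.log (G (1 - t / 2 ^ n)) := by
    intro t ht n
    induction n with
    | zero => simp
    | succ n ihn =>
      have htn : t / 2 ^ n ∈ Set.Icc (0:ℝ) 1 := by
        constructor
        · exact div_nonneg ht.1 (by positivity)
        · rw [div_le_one (by positivity)]
          exact ht.2.trans (one_le_pow₀ one_le_two)
      rw [ihn, hstep _ htn, Real.log_pow, show t / 2 ^ n / 2 = t / 2 ^ (n+1) by ring]
      push_cast
      ring
  -- difference representation
  have hsumdiff : ∀ u ∈ Set.Icc (0:ℝ) 1, Summable (fun m : ℕ => g m * (1 - (1 - u) ^ m)) := by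
    intro u hu
    have h1u : (1 - u) ∈ Set.Icc (0:ℝ) 1 := ⟨by linarith [hu.2], by linarith [hu.1]⟩
    have := hgsum.sub (hterm _ h1u)
    apply this.congr
    intro m; ring
  have hsub : ∀ u ∈ Set.Icc (0:ℝ) 1, 1 - G (1 - u) = ∑' m : ℕ, g m * (1 - (1 - u) ^ m) := by
    intro u hu
    have h1u : (1 - u) ∈ Set.Icc (0:ℝ) 1 := ⟨by linarith [hu.2], by linarith [hu.1]⟩
    have h2 : ∑' m : ℕ, (g m - g m * (1 - u) ^ m) = 1 - G (1 - u) := by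
      rw [Summable.tsum_sub hgsum (hterm _ h1u), hg1, hGval _ h1u]
    rw [← h2]
    congr 1; funext m; ring
  -- nonnegativity of terms
  have hterm_nn : ∀ u ∈ Set.Icc (0:ℝ) 1, ∀ m : ℕ, 0 ≤ g m * (1 - (1 - u) ^ m) := by
    intro u hu m
    apply mul_nonneg (hg0 m)
    have : (1 - u) ^ m ≤ 1 := pow_le_one₀ (by linarith [hu.2]) (by linarith [hu.1])
    linarith
  -- Bernoulli bound
  have hBern : ∀ u ∈ Set.Icc (0:ℝ) 1, ∀ m : ℕ, 1 - (1 - u) ^ m ≤ m * u := by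
    intro u hu m
    have h := one_add_mul_le_pow (a := -u) (by linarith [hu.2]) m
    rw [show (1:ℝ) + -u = 1 - u by ring] at h
    have : 1 + (m:ℝ) * (-u) ≤ (1-u)^m := h
    nlinarith
  -- the sequence 1/2^n
  have hu0' : Filter.Tendsto (fun n : ℕ => (1:ℝ) / 2 ^ n) atTop (𝓝 0) := by
    simp only [one_div, ← inv_pow]
    exact tendsto_pow_atTop_nhds_zero_of_lt_one (by norm_num) (by norm_num)
  -- summability of m * g m
  have hsummg : Summable (fun m : ℕ => (m : ℝ) * g m) := by
    apply summable_of_sum_range_le (c := -Real.log (G 0))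
      (fun m => mul_nonneg (Nat.cast_nonneg m) (hg0 m))
    intro M
    set u : ℕ → ℝ := fun n => 1 / 2 ^ n with hu
    have hupos : ∀ n, 0 < u n := fun n => by rw [hu]; positivity
    have humem : ∀ n, u n ∈ Set.Icc (0:ℝ) 1 := by
      intro n
      refine ⟨(hupos n).le, ?_⟩
      rw [hu]
      simp only
      rw [div_le_one (by positivity)]
      exact one_le_pow₀ one_le_two
    have hu0 : Filter.Tendsto u atTop (𝓝[≠] 0) :=
      tendsto_nhdsWithin_of_tendsto_nhds_of_eventually_within _ hu0'
        (Eventually.of_forall fun n => (hupos n).ne')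
    have hbound : ∀ n, (∑ m ∈ Finset.range M, g m * ((1 - (1 - u n) ^ m) / u n))
        ≤ -Real.log (G 0) := by
      intro n
      have hlog := hiter 1 ⟨zero_le_one, le_refl 1⟩ n
      have e1 : (1:ℝ) / 2 ^ n = u n := rfl
      have step1 : ∑ m ∈ Finset.range M, g m * (1 - (1 - u n) ^ m)
          ≤ 1 - G (1 - u n) := by
        rw [hsub _ (humem n)]
        exact Summable.sum_le_tsum _ (fun m _ => hterm_nn _ (humem n) m) (hsumdiff _ (humem n))
      have hGpos_n : 0 < G (1 - u n) := by
        apply hGpos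
        constructor
        · linarith [(humem n).2]
        · linarith [(hupos n)]
      have step2 : 1 - G (1 - u n) ≤ -Real.log (G (1 - u n)) := by
        have := Real.log_le_sub_one_of_pos hGpos_n
        linarith
      rw [show (1:ℝ)-1 = 0 by ring] at hlog
      rw [e1] at hlog
      calc ∑ m ∈ Finset.range M, g m * ((1 - (1 - u n) ^ m) / u n)
          = (∑ m ∈ Finset.range M, g m * (1 - (1 - u n) ^ m)) / u n := by
            simp only [Finset.sum_div, mul_div_assoc]
        _ ≤ (1 - G (1 - u n)) / u n := by gcongr
        _ ≤ (-Real.log (G (1 - u n))) / u n := by gcongr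
        _ = -Real.log (G (1 - u n)) * 2 ^ n := by
            rw [hu]; simp only; rw [div_div_eq_mul_div, div_one]
        _ = -Real.log (G 0) := by rw [hlog]; ring
    have htend : Filter.Tendsto
        (fun n => ∑ m ∈ Finset.range M, g m * ((1 - (1 - u n) ^ m) / u n)) atTop
        (𝓝 (∑ m ∈ Finset.range M, g m * m)) := by
      apply tendsto_finset_sum
      intro m _
      exact tendsto_const_nhds.mul ((slope_pow_tendsto m).comp hu0)
    have hle := le_of_tendsto htend (Eventually.of_forall hbound)
    calc ∑ m ∈ Finset.range M, (m:ℝ) * g m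
        = ∑ m ∈ Finset.range M, g m * m := Finset.sum_congr rfl fun m _ => mul_comm _ _
      _ ≤ -Real.log (G 0) := hle
  set lam : ℝ := ∑' m : ℕ, (m : ℝ) * g m with hlam
  have hlam0 : 0 ≤ lam :=
    tsum_nonneg fun m => mul_nonneg (Nat.cast_nonneg m) (hg0 m)
  -- upper bound : 1 - G (1-u) ≤ lam * u
  have hupper : ∀ u ∈ Set.Icc (0:ℝ) 1, 1 - G (1 - u) ≤ lam * u := by
    intro u hu
    rw [hsub u hu]
    calc ∑' m : ℕ, g m * (1 - (1 - u) ^ m)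
        ≤ ∑' m : ℕ, (m : ℝ) * g m * u := by
          apply Summable.tsum_le_tsum _ (hsumdiff u hu) (hsummg.mul_right u)
          intro m
          have h1 := hBern u hu m
          have h2 := hg0 m
          nlinarith
      _ = lam * u := by rw [tsum_mul_right]
  -- key : log G (1 - t) = -(lam * t) on (0,1]
  have key : ∀ t ∈ Set.Ioc (0:ℝ) 1, Real.log (G (1 - t)) = -(lam * t) := by
    intro t ht
    set u : ℕ → ℝ := fun n => t / 2 ^ n with hu
    have hupos : ∀ n, 0 < u n := fun n => div_pos ht.1 (by positivity)
    have humem : ∀ n, u n ∈ Set.Icc (0:ℝ) 1 := by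
      intro n
      refine ⟨(hupos n).le, ?_⟩
      rw [hu]; simp only
      rw [div_le_one (by positivity)]
      exact ht.2.trans (one_le_pow₀ one_le_two)
    have hu0 : Filter.Tendsto u atTop (𝓝 0) := by
      have : u = fun n => t * (1 / 2 ^ n) := by funext n; rw [hu]; ring
      rw [this]
      simpa using hu0'.const_mul t
    have hu0' : Filter.Tendsto u atTop (𝓝[≠] 0) :=
      tendsto_nhdsWithin_of_tendsto_nhds_of_eventually_within _ hu0
        (Eventually.of_forall fun n => (hupos n).ne')
    have hGmem : ∀ n, (1 - u n) ∈ Set.Icc (0:ℝ) 1 := fun n =>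
      ⟨by linarith [(humem n).2], by linarith [(hupos n)]⟩
    have hGpos_n : ∀ n, 0 < G (1 - u n) := fun n => hGpos _ (hGmem n)
    -- G (1 - u n) → 1
    have hGto1 : Filter.Tendsto (fun n => G (1 - u n)) atTop (𝓝 1) := by
      have hlow : ∀ n, 1 - lam * u n ≤ G (1 - u n) := by
        intro n; have := hupper _ (humem n); linarith
      have h1 : Filter.Tendsto (fun n => 1 - lam * u n) atTop (𝓝 1) := by
        have := (hu0.const_mul lam).const_sub 1
        simpa using this
      apply tendsto_of_tendsto_of_tendsto_of_le_of_le h1 tendsto_const_nhds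
      · intro n; exact hlow n
      · intro n; exact hGle _ (hGmem n)
    -- b n := (1 - G (1 - u n)) / u n → lam
    have hB : Filter.Tendsto (fun n => (1 - G (1 - u n)) / u n) atTop (𝓝 lam) := by
      rw [Metric.tendsto_atTop]
      intro ε hε
      -- choose M with lam - ε/2 < S_M
      obtain ⟨M, hM⟩ : ∃ M, lam - ε / 2 < ∑ m ∈ Finset.range M, (m:ℝ) * g m := by
        have := hsummg.hasSum.tendsto_sum_nat
        rw [Metric.tendsto_atTop] at this
        obtain ⟨N, hN⟩ := this (ε / 2) (by linarith)
        refine ⟨N, ?_⟩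
        have := hN N (le_refl N)
        rw [Real.dist_eq, abs_lt] at this
        linarith [this.1]
      have hSM : ∑ m ∈ Finset.range M, (m:ℝ) * g m ≤ lam :=
        Summable.sum_le_tsum _ (fun m _ => mul_nonneg (Nat.cast_nonneg m) (hg0 m)) hsummg
      -- c n → S_M
      have hc : Filter.Tendsto
          (fun n => ∑ m ∈ Finset.range M, g m * ((1 - (1 - u n) ^ m) / u n)) atTop
          (𝓝 (∑ m ∈ Finset.range M, g m * m)) := by
        apply tendsto_finset_sum
        intro m _
        exact tendsto_const_nhds.mul ((slope_pow_tendsto m).comp hu0')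
      rw [Metric.tendsto_atTop] at hc
      obtain ⟨N2, hN2⟩ := hc (ε / 2) (by linarith)
      refine ⟨N2, fun n hn => ?_⟩
      have hcn := hN2 n hn
      rw [Real.dist_eq, abs_lt] at hcn
      -- c n ≤ b n
      have hcb : ∑ m ∈ Finset.range M, g m * ((1 - (1 - u n) ^ m) / u n)
          ≤ (1 - G (1 - u n)) / u n := by
        calc ∑ m ∈ Finset.range M, g m * ((1 - (1 - u n) ^ m) / u n)
            = (∑ m ∈ Finset.range M, g m * (1 - (1 - u n) ^ m)) / u n := by
              simp only [Finset.sum_div, mul_div_assoc]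
          _ ≤ (1 - G (1 - u n)) / u n := by
              have step1 : ∑ m ∈ Finset.range M, g m * (1 - (1 - u n) ^ m)
                  ≤ 1 - G (1 - u n) := by
                rw [hsub _ (humem n)]
                exact Summable.sum_le_tsum _ (fun m _ => hterm_nn _ (humem n) m)
                  (hsumdiff _ (humem n))
              gcongr
              exact (hupos n).le
      -- b n ≤ lam
      have hbl : (1 - G (1 - u n)) / u n ≤ lam := by
        rw [div_le_iff₀ (hupos n)]
        exact (hupper _ (humem n)).trans (by ring_nf; exact le_refl _)
      have hsm : ∑ m ∈ Finset.range M, g m * (m:ℝ) = ∑ m ∈ Finset.range M, (m:ℝ) * g m :=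
        Finset.sum_congr rfl fun m _ => mul_comm _ _
      rw [Real.dist_eq, abs_lt]
      constructor
      · have := hcn.1
        rw [hsm] at this
        linarith [hcb]
      · linarith [hbl]
    -- now squeeze  -log G(1-t)
    have ha : ∀ n : ℕ, -Real.log (G (1 - t)) = (-Real.log (G (1 - u n))) * 2 ^ n := by
      intro n
      have := hiter t ⟨ht.1.le, ht.2⟩ n
      rw [hu]; simp only
      rw [this]; ring
    have h2u : ∀ n : ℕ, (2:ℝ) ^ n = t / u n := by
      intro n
      rw [hu]; simp only
      rw [div_div_eq_mul_div, mul_comm, mul_div_assoc, div_self (ne_of_gt ht.1), mul_one]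
    have hlow2 : ∀ n : ℕ, ((1 - G (1 - u n)) / u n) * t ≤ -Real.log (G (1 - t)) := by
      intro n
      rw [ha n, h2u n]
      have hlog := Real.log_le_sub_one_of_pos (hGpos_n n)
      have hnum : 1 - G (1 - u n) ≤ -Real.log (G (1 - u n)) := by linarith
      calc (1 - G (1 - u n)) / u n * t ≤ (-Real.log (G (1 - u n))) / u n * t := by
            gcongr
            all_goals first | exact (hupos n).le | exact ht.1.le | exact hnum
        _ = -Real.log (G (1 - u n)) * (t / u n) := by ring
    have hupp2 : ∀ n : ℕ, -Real.log (G (1 - t))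
        ≤ (((1 - G (1 - u n)) / u n) * t) / G (1 - u n) := by
      intro n
      rw [ha n, h2u n]
      have hlog : -Real.log (G (1 - u n)) ≤ (1 - G (1 - u n)) / G (1 - u n) := by
        have h := Real.log_le_sub_one_of_pos (inv_pos.mpr (hGpos_n n))
        rw [Real.log_inv] at h
        have : (G (1 - u n))⁻¹ - 1 = (1 - G (1 - u n)) / G (1 - u n) := by
          rw [sub_div, div_self (ne_of_gt (hGpos_n n)), inv_eq_one_div]
        linarith [h, this.symm.le]
      calc -Real.log (G (1 - u n)) * (t / u n)
          ≤ ((1 - G (1 - u n)) / G (1 - u n)) * (t / u n) := by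
            gcongr
            all_goals first | positivity | exact div_nonneg ht.1.le (hupos n).le | exact hlog
        _ = (((1 - G (1 - u n)) / u n) * t) / G (1 - u n) := by ring
    have hlimlow : lam * t ≤ -Real.log (G (1 - t)) :=
      le_of_tendsto (hB.mul_const t) (Eventually.of_forall hlow2)
    have hlimupp : -Real.log (G (1 - t)) ≤ lam * t := by
      have htendu : Filter.Tendsto
          (fun n => (((1 - G (1 - u n)) / u n) * t) / G (1 - u n)) atTop
          (𝓝 ((lam * t) / 1)) := (hB.mul_const t).div hGto1 one_ne_zero
      rw [div_one] at htendu
      exact ge_of_tendsto htendu (Eventually.of_forall hupp2)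
    linarith
  refine ⟨lam, hlam0, ?_⟩
  have hc_sum : Summable (fun m : ℕ => Real.exp (-lam) * lam ^ m / m.factorial) := by
    have h := Real.summable_pow_div_factorial lam
    apply (h.mul_left (Real.exp (-lam))).congr
    intro m; rw [mul_div_assoc]
  have hGexp : ∀ s ∈ Set.Ioc (0:ℝ) 1, G s = Real.exp (lam * (s - 1)) := by
    intro s hs
    rcases eq_or_lt_of_le hs.2 with h1 | h1
    · rw [h1, hG1]
      simp
    · have hk := key (1 - s) ⟨by linarith, by linarith [hs.1]⟩
      rw [show 1 - (1 - s) = s by ring] at hk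
      have hpos := hGpos s ⟨hs.1.le, hs.2⟩
      rw [← Real.exp_log hpos, hk]
      congr 1; ring
  have hzero : ∀ s ∈ Set.Ioc (0:ℝ) 1,
      ∑' m : ℕ, (g m - Real.exp (-lam) * lam ^ m / m.factorial) * s ^ m = 0 := by
    intro s hs
    have hsmem : s ∈ Set.Icc (0:ℝ) 1 := ⟨hs.1.le, hs.2⟩
    have hcs : Summable (fun m : ℕ => (Real.exp (-lam) * lam ^ m / m.factorial) * s ^ m) := by
      have h := Real.summable_pow_div_factorial (lam * s)
      apply (h.mul_left (Real.exp (-lam))).congr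
      intro m
      rw [mul_pow]; ring
    have e1 : ∑' m : ℕ, (Real.exp (-lam) * lam ^ m / m.factorial) * s ^ m
        = Real.exp (lam * (s - 1)) := by
      have he : ∀ m : ℕ, (Real.exp (-lam) * lam ^ m / m.factorial) * s ^ m
          = Real.exp (-lam) * ((lam * s) ^ m / m.factorial) := by
        intro m; rw [mul_pow]; ring
      rw [tsum_congr he, tsum_mul_left, ← my_exp_tsum, ← Real.exp_add]
      congr 1; ring
    have e2 : ∑' m : ℕ, (g m - Real.exp (-lam) * lam ^ m / m.factorial) * s ^ m
        = (∑' m : ℕ, g m * s ^ m)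
          - ∑' m : ℕ, (Real.exp (-lam) * lam ^ m / m.factorial) * s ^ m := by
      rw [← Summable.tsum_sub (hterm s hsmem) hcs]
      congr 1; funext m; ring
    rw [e2, e1, ← hGval s hsmem, hGexp s hs, sub_self]
  have hd : Summable (fun m : ℕ => |g m - Real.exp (-lam) * lam ^ m / m.factorial|) := by
    apply (hgsum.add hc_sum).of_nonneg_of_le (fun m => abs_nonneg _)
    intro m
    have h2 : (0:ℝ) ≤ Real.exp (-lam) * lam ^ m / m.factorial := by positivity
    rw [sub_eq_add_neg]
    refine (abs_add_le _ _).trans ?_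
    rw [abs_neg, abs_of_nonneg (hg0 m), abs_of_nonneg h2]
  intro m
  have hz := coeff_unique _ hd hzero m
  linarith [hz]
end

section
/- Suppose that f takes nonzero values at infinitely many elements of A (so that, being summable, the nonzero values of f accumulate at 0), that E[r^M] < ∞ for some r > 1 (so that the probability generating function G_M extends analytically to a neighborhood of 1), and that the occupancy indicators are pairwise uncorrelated, i.e. Cov(ν'_ℓ, ν'_{ℓ'}) = 0 for all distinct ℓ, ℓ' ∈ A. Then M follows a Poisson distribution: there exists λ ≥ 0 with P(M = m) = e^{−λ} λ^m / m! for all m ∈ ℕ. -/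
open MeasureTheory ProbabilityTheory Filter
open scoped Topology ENNReal NNReal


lemma myHasFPowerSeriesOnBall_ofScalars (c : ℕ → ℝ) (f : ℝ → ℝ) (ρ : ℝ) (hρ : 0 < ρ)
    (hsum : Summable fun n => |c n| * ρ ^ n)
    (hf : ∀ y : ℝ, |y| < ρ → HasSum (fun n => c n * y ^ n) (f y)) :
    HasFPowerSeriesOnBall f (FormalMultilinearSeries.ofScalars ℝ c) 0 (ENNReal.ofReal ρ) := by
  constructor
  · rw [ENNReal.ofReal]
    apply FormalMultilinearSeries.le_radius_of_summable_norm
    simp only [FormalMultilinearSeries.ofScalars_norm, Real.coe_toNNReal _ hρ.le]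
    simpa using hsum
  · exact ENNReal.ofReal_pos.mpr hρ
  · intro y hy
    rw [EMetric.mem_ball, edist_dist, dist_zero_right,
      ENNReal.ofReal_lt_ofReal_iff hρ, Real.norm_eq_abs] at hy
    have := hf y hy
    rw [zero_add]
    convert this using 1
    · rfl
    funext n
    rw [FormalMultilinearSeries.ofScalars_apply_eq, smul_eq_mul]

lemma myAnalyticAt_ofSeries (c : ℕ → ℝ) (f : ℝ → ℝ) (ρ : ℝ) (hρ : 0 < ρ)
    (hsum : Summable fun n => |c n| * ρ ^ n)
    (hf : ∀ y : ℝ, |y| < ρ → HasSum (fun n => c n * y ^ n) (f y)) :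
    ∀ z : ℝ, |z| < ρ → AnalyticAt ℝ f z := by
  intro z hz
  have h := (myHasFPowerSeriesOnBall_ofScalars c f ρ hρ hsum hf).analyticOnNhd
  apply h
  rw [EMetric.mem_ball, edist_dist, dist_zero_right,
    ENNReal.ofReal_lt_ofReal_iff hρ, Real.norm_eq_abs]
  exact hz

lemma myKey {Ω A : Type*} [MeasurableSpace Ω] [MeasurableSpace A]
    [MeasurableSingletonClass A]
    (μ : Measure Ω) [IsProbabilityMeasure μ]
    (f : A → ℝ) (hf0 : ∀ ℓ, 0 ≤ f ℓ)
    (M : Ω → ℕ) (hM : Measurable M)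
    (X : ℕ → Ω → A) (hX : ∀ k, Measurable (X k))
    (hXdist : ∀ k ℓ, (μ {ω | X k ω = ℓ}).toReal = f ℓ)
    (hXiid : iIndepFun X μ)
    (hMX : IndepFun M (fun ω k => X k ω) μ)
    (T : Finset A) (hq1 : ∑ ℓ ∈ T, f ℓ ≤ 1) :
    MeasurableSet {ω | ∀ k < M ω, X k ω ∉ (T : Set A)} ∧
    μ {ω | ∀ k < M ω, X k ω ∉ (T : Set A)}
      = ∑' m, ENNReal.ofReal ((μ {ω | M ω = m}).toReal * (1 - ∑ ℓ ∈ T, f ℓ) ^ m) := by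
  classical
  set q : ℝ := ∑ ℓ ∈ T, f ℓ with hqdef
  have hq0 : 0 ≤ q := Finset.sum_nonneg fun ℓ _ => hf0 ℓ
  have hTmeas : MeasurableSet (T : Set A) := T.finite_toSet.measurableSet
  have hTc : MeasurableSet ((T : Set A))ᶜ := hTmeas.compl
  set B : ℕ → Set Ω := fun m => ⋂ k ∈ Finset.range m, X k ⁻¹' ((T : Set A))ᶜ with hBdef
  have hBmeas : ∀ m, MeasurableSet (B m) :=
    fun m => (Finset.range m).measurableSet_biInter fun k _ => (hX k) hTc
  have hdecomp : {ω | ∀ k < M ω, X k ω ∉ (T : Set A)} = ⋃ m, ({ω | M ω = m} ∩ B m) := by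
    ext ω
    simp only [Set.mem_setOf_eq, Set.mem_iUnion, Set.mem_inter_iff, hBdef, Set.mem_iInter,
      Finset.mem_range, Set.mem_preimage, Set.mem_compl_iff]
    constructor
    · exact fun h => ⟨M ω, rfl, fun k hk => h k hk⟩
    · rintro ⟨m, rfl, h⟩ k hk; exact h k hk
  have hmeasM : ∀ m, MeasurableSet {ω | M ω = m} := fun m => hM (measurableSet_singleton m)
  have hmeas : MeasurableSet {ω | ∀ k < M ω, X k ω ∉ (T : Set A)} := by
    rw [hdecomp]; exact MeasurableSet.iUnion fun m => (hmeasM m).inter (hBmeas m)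
  refine ⟨hmeas, ?_⟩
  have hXT : ∀ k, μ (X k ⁻¹' ((T : Set A))ᶜ) = ENNReal.ofReal (1 - q) := by
    intro k
    have h1 : X k ⁻¹' (T : Set A) = ⋃ ℓ ∈ T, X k ⁻¹' {ℓ} := by ext ω; simp
    have h2 : μ (X k ⁻¹' (T : Set A)) = ENNReal.ofReal q := by
      rw [h1, measure_biUnion_finset ?_ (fun ℓ _ => (hX k) (measurableSet_singleton ℓ))]
      · rw [hqdef, ENNReal.ofReal_sum_of_nonneg fun ℓ _ => hf0 ℓ]
        refine Finset.sum_congr rfl fun ℓ _ => ?_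
        rw [← hXdist k ℓ, ENNReal.ofReal_toReal (measure_ne_top μ _)]
        rfl
      · intro ℓ hℓ ℓ' hℓ' hne
        apply Set.disjoint_left.mpr
        rintro ω h h'
        simp only [Set.mem_preimage, Set.mem_singleton_iff] at h h'
        exact hne (h ▸ h' ▸ rfl)
    rw [Set.preimage_compl, measure_compl ((hX k) hTmeas) (measure_ne_top μ _), measure_univ, h2,
      ← ENNReal.ofReal_one, ← ENNReal.ofReal_sub _ hq0]
  have hBμ : ∀ m, μ (B m) = ENNReal.ofReal (1 - q) ^ m := by
    intro m
    have h := hXiid.measure_inter_preimage_eq_mul (Finset.range m)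
      (sets := fun _ => ((T : Set A))ᶜ) (fun k _ => hTc)
    rw [hBdef]
    simp only []
    rw [h, Finset.prod_congr rfl (fun k _ => hXT k), Finset.prod_const, Finset.card_range]
  have hMB : ∀ m, μ ({ω | M ω = m} ∩ B m) = μ {ω | M ω = m} * μ (B m) := by
    intro m
    have hC : MeasurableSet {g : ℕ → A | ∀ k ∈ Finset.range m, g k ∈ ((T : Set A))ᶜ} := by
      rw [show {g : ℕ → A | ∀ k ∈ Finset.range m, g k ∈ ((T : Set A))ᶜ}
          = ⋂ k ∈ Finset.range m, (fun g : ℕ → A => g k) ⁻¹' ((T : Set A))ᶜ by ext; simp]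
      exact (Finset.range m).measurableSet_biInter fun k _ => (measurable_pi_apply k) hTc
    have h2 : B m = (fun ω k => X k ω) ⁻¹'
        {g : ℕ → A | ∀ k ∈ Finset.range m, g k ∈ ((T : Set A))ᶜ} := by
      ext ω; simp [hBdef]
    have h1 : {ω | M ω = m} = M ⁻¹' {m} := by ext ω; simp
    rw [h1, h2]
    rw [hMX.measure_inter_preimage_eq_mul _ _ (measurableSet_singleton m) hC]
  rw [hdecomp, measure_iUnion ?_ (fun m => (hmeasM m).inter (hBmeas m))]
  · refine tsum_congr fun m => ?_
    rw [hMB m, hBμ m, ENNReal.ofReal_mul ENNReal.toReal_nonneg,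
      ENNReal.ofReal_pow (by linarith : (0:ℝ) ≤ 1 - q),
      ENNReal.ofReal_toReal (measure_ne_top μ _)]
  · intro m n hmn
    simp only [Function.onFun]
    apply Set.disjoint_left.mpr
    rintro ω ⟨h1, -⟩ ⟨h2, -⟩
    exact hmn (by rw [← h1, ← h2])


/-- In the occupancy model, suppose `f` is nonzero at infinitely many
elements, that `E[r^M] < ∞` for some `r > 1`, and that the occupancy indicators
`ν'_ℓ = 1{ν_ℓ ≥ 1}` are pairwise uncorrelated. Then `M` is Poisson distributed. -/
theorem occupancy_uncorrelated_implies_poisson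
    {Ω A : Type*} [MeasurableSpace Ω] [MeasurableSpace A]
    [MeasurableSingletonClass A] [Countable A] [DecidableEq A]
    (μ : Measure Ω) [IsProbabilityMeasure μ]
    (f : A → ℝ) (hf0 : ∀ ℓ, 0 ≤ f ℓ) (hf1 : ∑' ℓ, f ℓ = 1)
    (hfinf : {ℓ : A | f ℓ ≠ 0}.Infinite)
    (M : Ω → ℕ) (hM : Measurable M)
    (hmoment : ∃ r : ℝ, 1 < r ∧ Summable (fun m : ℕ => (μ {ω | M ω = m}).toReal * r ^ m))
    (X : ℕ → Ω → A) (hX : ∀ k, Measurable (X k))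
    (hXdist : ∀ k ℓ, (μ {ω | X k ω = ℓ}).toReal = f ℓ)
    (hXiid : iIndepFun X μ)
    (hMX : IndepFun M (fun ω k => X k ω) μ)
    (ν : A → Ω → ℕ)
    (hν : ∀ ℓ ω, ν ℓ ω = ∑ k ∈ Finset.range (M ω), (if X k ω = ℓ then 1 else 0))
    (ν' : A → Ω → ℝ)
    (hν' : ∀ ℓ ω, ν' ℓ ω = if 1 ≤ ν ℓ ω then 1 else 0)
    (huncorr : ∀ ℓ ℓ', ℓ ≠ ℓ' →
      (∫ ω, ν' ℓ ω * ν' ℓ' ω ∂μ) - (∫ ω, ν' ℓ ω ∂μ) * (∫ ω, ν' ℓ' ω ∂μ) = 0) :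
    ∃ lam : ℝ, 0 ≤ lam ∧
      ∀ m : ℕ, (μ {ω | M ω = m}).toReal
        = Real.exp (-lam) * lam ^ m / (Nat.factorial m) := by
  classical
  obtain ⟨r, hr1, hrsum⟩ := hmoment
  set p : ℕ → ℝ := fun m => (μ {ω | M ω = m}).toReal with hpdef
  have hp0 : ∀ m, 0 ≤ p m := fun m => ENNReal.toReal_nonneg
  have hr0 : (0:ℝ) < r := by linarith
  have hfsum : Summable f := by
    by_contra h
    rw [tsum_eq_zero_of_not_summable h] at hf1
    norm_num at hf1
  have hfle1 : ∀ T : Finset A, ∑ ℓ ∈ T, f ℓ ≤ 1 :=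
    fun T => hf1 ▸ Summable.sum_le_tsum T (fun ℓ _ => hf0 ℓ) hfsum
  have hpsum1 : ∑' m, p m = 1 := by
    have hdisj : Pairwise (Function.onFun Disjoint fun m => {ω | M ω = m}) := by
      intro m n hmn
      apply Set.disjoint_left.mpr
      rintro ω h1 h2
      exact hmn (by rw [← h1, ← h2])
    have hu : (⋃ m, {ω | M ω = m}) = Set.univ := by ext ω; simp
    have h := measure_iUnion (μ := μ) hdisj (fun m => hM (measurableSet_singleton m))
    rw [hu, measure_univ] at h
    have h2 := congrArg ENNReal.toReal h
    rw [ENNReal.tsum_toReal_eq (fun m => measure_ne_top μ _)] at h2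
    simpa using h2.symm
  have hsummand : ∀ s : ℝ, |s| < r → Summable fun m => p m * s ^ m := by
    intro s hs
    apply Summable.of_norm_bounded hrsum
    intro m
    rw [Real.norm_eq_abs, abs_mul, abs_of_nonneg (hp0 m), abs_pow]
    exact mul_le_mul_of_nonneg_left (pow_le_pow_left₀ (abs_nonneg s) hs.le m) (hp0 m)
  set G : ℝ → ℝ := fun s => ∑' m, p m * s ^ m with hGdef
  have hGsum : ∀ s : ℝ, |s| < r → HasSum (fun m => p m * s ^ m) (G s) :=
    fun s hs => (hsummand s hs).hasSum
  have habs : Summable fun m => |p m| * r ^ m := by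
    refine hrsum.congr fun m => ?_
    rw [abs_of_nonneg (hp0 m)]
  have hGanal : ∀ z : ℝ, |z| < r → AnalyticAt ℝ G z :=
    myAnalyticAt_ofSeries p G r hr0 (by simpa using habs) hGsum
  have hpsum : Summable p := by
    have := hsummand 1 (by rw [abs_one]; exact hr1)
    simpa using this
  have hG1 : G 1 = 1 := by
    rw [hGdef]
    simpa using hpsum1
  have hGle1 : ∀ t : ℝ, 0 ≤ t → t ≤ 1 → G (1 - t) ≤ 1 := by
    intro t ht0 ht1
    have h1 : |1 - t| < r := by
      rw [abs_of_nonneg (by linarith)]; linarith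
    have h2 : (∑' m, p m * (1 - t) ^ m) ≤ ∑' m, p m := by
      refine Summable.tsum_le_tsum (fun m => ?_) (hsummand _ h1) hpsum
      have hple := pow_le_one₀ (a := 1 - t) (by linarith) (by linarith) (n := m)
      exact mul_le_of_le_one_right (hp0 m) hple
    calc G (1 - t) = ∑' m, p m * (1 - t) ^ m := rfl
      _ ≤ ∑' m, p m := h2
      _ = 1 := hpsum1
  -- measure of "no hits in T" events
  have keyG : ∀ T : Finset A,
      MeasurableSet {ω | ∀ k < M ω, X k ω ∉ (T : Set A)} ∧
      (μ {ω | ∀ k < M ω, X k ω ∉ (T : Set A)}).toReal = G (1 - ∑ ℓ ∈ T, f ℓ) := by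
    intro T
    obtain ⟨h1, h2⟩ := myKey μ f hf0 M hM X hX hXdist hXiid hMX T (hfle1 T)
    refine ⟨h1, ?_⟩
    have hq0 : 0 ≤ ∑ ℓ ∈ T, f ℓ := Finset.sum_nonneg fun ℓ _ => hf0 ℓ
    rw [h2, ENNReal.tsum_toReal_eq (fun m => ENNReal.ofReal_ne_top), hGdef]
    refine tsum_congr fun m => ?_
    rw [ENNReal.toReal_ofReal
      (mul_nonneg (hp0 m) (pow_nonneg (by linarith [hfle1 T]) m))]
  have hscompl : ∀ ℓ : A,
      {ω | 1 ≤ ν ℓ ω} = {ω | ∀ k < M ω, X k ω ∉ (({ℓ} : Finset A) : Set A)}ᶜ := by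
    intro ℓ
    ext ω
    simp only [Set.mem_setOf_eq, Set.mem_compl_iff, Finset.coe_singleton,
      Set.mem_singleton_iff, not_forall]
    rw [hν ℓ ω, Nat.one_le_iff_ne_zero, Ne, Finset.sum_eq_zero_iff]
    simp only [Finset.mem_range, ite_eq_right_iff, one_ne_zero, imp_false, not_forall]
  have hsmeas : ∀ ℓ : A, MeasurableSet {ω | 1 ≤ ν ℓ ω} := by
    intro ℓ; rw [hscompl ℓ]; exact (keyG _).1.compl
  have hμs : ∀ ℓ : A, (μ {ω | 1 ≤ ν ℓ ω}).toReal = 1 - G (1 - f ℓ) := by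
    intro ℓ
    rw [hscompl ℓ]
    have h := measure_add_measure_compl (μ := μ) (keyG ({ℓ} : Finset A)).1
    rw [measure_univ] at h
    have h2 := congrArg ENNReal.toReal h
    rw [ENNReal.toReal_add (measure_ne_top μ _) (measure_ne_top μ _),
      ENNReal.toReal_one] at h2
    have h3 := (keyG ({ℓ} : Finset A)).2
    rw [Finset.sum_singleton] at h3
    linarith
  have hindic : ∀ ℓ : A,
      (fun ω => ν' ℓ ω) = Set.indicator {ω | 1 ≤ ν ℓ ω} (1 : Ω → ℝ) := by
    intro ℓ; funext ω
    rw [hν' ℓ ω, Set.indicator_apply]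
    by_cases h : 1 ≤ ν ℓ ω <;> simp [h]
  have hE1 : ∀ ℓ : A, ∫ ω, ν' ℓ ω ∂μ = 1 - G (1 - f ℓ) := by
    intro ℓ
    rw [hindic ℓ, integral_indicator_one (hsmeas ℓ), measureReal_def, hμs ℓ]
  have hE2 : ∀ ℓ ℓ' : A, ℓ ≠ ℓ' → ∫ ω, ν' ℓ ω * ν' ℓ' ω ∂μ
      = 1 - G (1 - f ℓ) - G (1 - f ℓ') + G (1 - f ℓ - f ℓ') := by
    intro ℓ ℓ' hne
    have hindic2 : (fun ω => ν' ℓ ω * ν' ℓ' ω)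
        = Set.indicator ({ω | 1 ≤ ν ℓ ω} ∩ {ω | 1 ≤ ν ℓ' ω}) (1 : Ω → ℝ) := by
      funext ω
      rw [hν' ℓ ω, hν' ℓ' ω, Set.indicator_apply]
      by_cases h : 1 ≤ ν ℓ ω <;> by_cases h' : 1 ≤ ν ℓ' ω <;>
        simp [h, h', Set.mem_inter_iff]
    rw [hindic2, integral_indicator_one ((hsmeas ℓ).inter (hsmeas ℓ')), measureReal_def]
    rw [hscompl ℓ, hscompl ℓ', ← Set.compl_union]
    have hEi : {ω | ∀ k < M ω, X k ω ∉ (({ℓ} : Finset A) : Set A)}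
        ∩ {ω | ∀ k < M ω, X k ω ∉ (({ℓ'} : Finset A) : Set A)}
        = {ω | ∀ k < M ω, X k ω ∉ (({ℓ, ℓ'} : Finset A) : Set A)} := by
      ext ω
      simp only [Set.mem_inter_iff, Set.mem_setOf_eq, Finset.coe_singleton,
        Set.mem_singleton_iff, Finset.coe_insert, Set.mem_insert_iff, not_or]
      constructor
      · rintro ⟨h1, h2⟩ k hk
        exact ⟨h1 k hk, h2 k hk⟩
      · intro h
        exact ⟨fun k hk => (h k hk).1, fun k hk => (h k hk).2⟩
    have hc := measure_add_measure_compl (μ := μ)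
      ((keyG ({ℓ} : Finset A)).1.union (keyG ({ℓ'} : Finset A)).1)
    rw [measure_univ] at hc
    have hu := measure_union_add_inter (μ := μ)
      {ω | ∀ k < M ω, X k ω ∉ (({ℓ} : Finset A) : Set A)} (keyG ({ℓ'} : Finset A)).1
    rw [hEi] at hu
    have hu2 := congrArg ENNReal.toReal hu
    have hc2 := congrArg ENNReal.toReal hc
    rw [ENNReal.toReal_add (measure_ne_top μ _) (measure_ne_top μ _),
      ENNReal.toReal_add (measure_ne_top μ _) (measure_ne_top μ _)] at hu2
    rw [ENNReal.toReal_add (measure_ne_top μ _) (measure_ne_top μ _),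
      ENNReal.toReal_one] at hc2
    have hA1 := (keyG ({ℓ} : Finset A)).2
    have hA2 := (keyG ({ℓ'} : Finset A)).2
    have hA12 := (keyG ({ℓ, ℓ'} : Finset A)).2
    rw [Finset.sum_singleton] at hA1 hA2
    rw [Finset.sum_pair hne] at hA12
    rw [show (1 : ℝ) - (f ℓ + f ℓ') = 1 - f ℓ - f ℓ' by ring] at hA12
    linarith [hu2, hc2, hA1, hA2, hA12]
  have funEq : ∀ ℓ ℓ' : A, ℓ ≠ ℓ' → G (1 - f ℓ - f ℓ') = G (1 - f ℓ) * G (1 - f ℓ') := by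
    intro ℓ ℓ' hne
    have h := huncorr ℓ ℓ' hne
    rw [hE2 ℓ ℓ' hne, hE1 ℓ, hE1 ℓ'] at h
    linear_combination h
  -- small values of f accumulate at 0
  have hsmall : ∀ (ℓ₀ : A) (ε : ℝ), 0 < ε → ∃ ℓ, ℓ ≠ ℓ₀ ∧ 0 < f ℓ ∧ f ℓ < ε := by
    intro ℓ₀ ε hε
    have hfin : {ℓ | ε ≤ f ℓ}.Finite := by
      have h3 : ∀ᶠ ℓ in Filter.cofinite, f ℓ < ε :=
        hfsum.tendsto_cofinite_zero.eventually_lt_const hε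
      have h2 : {ℓ | ¬ f ℓ < ε}.Finite := Filter.eventually_cofinite.mp h3
      exact h2.subset fun ℓ h => not_lt.mpr h
    have hinf2 : ({ℓ | f ℓ ≠ 0} \ ({ℓ | ε ≤ f ℓ} ∪ {ℓ₀})).Infinite :=
      hfinf.diff (hfin.union (Set.finite_singleton ℓ₀))
    obtain ⟨ℓ, h1, h2⟩ := hinf2.nonempty
    simp only [Set.mem_union, Set.mem_setOf_eq, Set.mem_singleton_iff, not_or] at h2
    exact ⟨ℓ, h2.2, (hf0 ℓ).lt_of_ne (Ne.symm h1), lt_of_not_ge h2.1⟩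
  have hfreq : ∀ P : ℝ → Prop, (∀ ε : ℝ, 0 < ε → ∃ b, 0 < b ∧ b < ε ∧ P b) →
      ∃ᶠ b in 𝓝[≠] (0:ℝ), P b := by
    intro P h
    rw [(nhdsWithin_hasBasis Metric.nhds_basis_ball _).frequently_iff]
    intro ε hε
    obtain ⟨b, hb0, hbe, hPb⟩ := h ε hε
    refine ⟨b, ⟨?_, ?_⟩, hPb⟩
    · rw [Metric.mem_ball, Real.dist_eq, sub_zero, abs_of_pos hb0]; exact hbe
    · exact hb0.ne'
  -- H = G (1 - ·)
  set H : ℝ → ℝ := fun t => G (1 - t) with hHdef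
  have hHanal : ∀ t : ℝ, |1 - t| < r → AnalyticAt ℝ H t := by
    intro t ht
    exact (hGanal _ ht).comp (analyticAt_const.sub analyticAt_id)
  set ε2 : ℝ := (r - 1) / 2 with hε2def
  set ε4 : ℝ := (r - 1) / 4 with hε4def
  set ε8 : ℝ := (r - 1) / 8 with hε8def
  have hε2pos : 0 < ε2 := by rw [hε2def]; linarith
  have hε4pos : 0 < ε4 := by rw [hε4def]; linarith
  have hε8pos : 0 < ε8 := by rw [hε8def]; linarith
  have hε2lt : ε2 < r - 1 := by rw [hε2def]; linarith
  have hε42 : ε4 < ε2 := by rw [hε4def, hε2def]; linarith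
  have hε84 : ε8 < ε4 := by rw [hε8def, hε4def]; linarith
  have hfle1' : ∀ ℓ : A, f ℓ ≤ 1 := by
    intro ℓ
    have := hfle1 {ℓ}
    rwa [Finset.sum_singleton] at this
  -- claim 1
  have claim1 : ∀ ℓ₀ : A, f ℓ₀ ≠ 0 → ∀ b : ℝ, |b| < ε2 → H (f ℓ₀ + b) = H (f ℓ₀) * H b := by
    intro ℓ₀ hℓ₀ b hb
    have ha0 : 0 < f ℓ₀ := (hf0 ℓ₀).lt_of_ne (Ne.symm hℓ₀)
    have ha1 : f ℓ₀ ≤ 1 := hfle1' ℓ₀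
    have heq : Set.EqOn (fun b => H (f ℓ₀ + b)) (fun b => H (f ℓ₀) * H b)
        (Metric.ball (0:ℝ) ε2) := by
      apply AnalyticOnNhd.eqOn_of_preconnected_of_frequently_eq (z₀ := (0:ℝ))
      · intro x hx
        rw [Metric.mem_ball, Real.dist_eq, sub_zero] at hx
        obtain ⟨hx1, hx2⟩ := abs_lt.mp hx
        have harg : |1 - (f ℓ₀ + x)| < r := by
          rw [abs_lt]; constructor <;> linarith
        have hinner : AnalyticAt ℝ (fun b : ℝ => f ℓ₀ + b) x :=
          analyticAt_const.add analyticAt_id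
        exact (hHanal _ harg).comp hinner
      · intro x hx
        rw [Metric.mem_ball, Real.dist_eq, sub_zero] at hx
        obtain ⟨hx1, hx2⟩ := abs_lt.mp hx
        have harg : |1 - x| < r := by
          rw [abs_lt]; constructor <;> linarith
        exact analyticAt_const.mul (hHanal _ harg)
      · exact (convex_ball (0:ℝ) ε2).isPreconnected
      · exact Metric.mem_ball_self hε2pos
      · apply hfreq
        intro ε hε
        obtain ⟨ℓ, hne, hpos, hlt⟩ := hsmall ℓ₀ ε hε
        refine ⟨f ℓ, hpos, hlt, ?_⟩
        show H (f ℓ₀ + f ℓ) = H (f ℓ₀) * H (f ℓ)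
        rw [hHdef]
        simp only []
        rw [show (1 : ℝ) - (f ℓ₀ + f ℓ) = 1 - f ℓ₀ - f ℓ by ring]
        exact funEq ℓ₀ ℓ (Ne.symm hne)
    have hbmem : b ∈ Metric.ball (0:ℝ) ε2 := by
      rw [Metric.mem_ball, Real.dist_eq, sub_zero]; exact hb
    exact heq hbmem
  -- claim 2
  have claim2 : ∀ a b : ℝ, |a| < ε4 → |b| < ε4 → H (a + b) = H a * H b := by
    intro a b ha hb
    obtain ⟨hb1, hb2⟩ := abs_lt.mp hb
    have heq : Set.EqOn (fun a => H (a + b)) (fun a => H a * H b)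
        (Metric.ball (0:ℝ) ε4) := by
      apply AnalyticOnNhd.eqOn_of_preconnected_of_frequently_eq (z₀ := (0:ℝ))
      · intro x hx
        rw [Metric.mem_ball, Real.dist_eq, sub_zero] at hx
        obtain ⟨hx1, hx2⟩ := abs_lt.mp hx
        have harg : |1 - (x + b)| < r := by
          rw [abs_lt]; constructor <;> linarith
        have hinner : AnalyticAt ℝ (fun a : ℝ => a + b) x :=
          analyticAt_id.add analyticAt_const
        exact AnalyticAt.comp (g := H) (f := fun a : ℝ => a + b) (x := x)
          (hHanal _ harg) hinner
      · intro x hx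
        rw [Metric.mem_ball, Real.dist_eq, sub_zero] at hx
        obtain ⟨hx1, hx2⟩ := abs_lt.mp hx
        have harg : |1 - x| < r := by
          rw [abs_lt]; constructor <;> linarith
        exact (hHanal _ harg).mul analyticAt_const
      · exact (convex_ball (0:ℝ) ε4).isPreconnected
      · exact Metric.mem_ball_self hε4pos
      · apply hfreq
        intro ε hε
        obtain ⟨ℓ₀, hℓ₀⟩ := hfinf.nonempty
        obtain ⟨ℓ, hne, hpos, hlt⟩ := hsmall ℓ₀ ε hε
        refine ⟨f ℓ, hpos, hlt, ?_⟩
        show H (f ℓ + b) = H (f ℓ) * H b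
        exact claim1 ℓ hpos.ne' b (by rw [abs_lt]; constructor <;> linarith)
    have hamem : a ∈ Metric.ball (0:ℝ) ε4 := by
      rw [Metric.mem_ball, Real.dist_eq, sub_zero]; exact ha
    exact heq hamem
  -- derivative of H
  have hH0 : H 0 = 1 := by
    rw [hHdef]
    simpa using hG1
  have hHanal' : ∀ t : ℝ, |t| < ε2 → AnalyticAt ℝ H t := by
    intro t ht
    obtain ⟨h1, h2⟩ := abs_lt.mp ht
    exact hHanal t (by rw [abs_lt]; constructor <;> linarith)
  set c : ℝ := deriv H 0 with hcdef
  have hderiv : ∀ b : ℝ, |b| < ε8 → HasDerivAt H (c * H b) b := by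
    intro b hb
    obtain ⟨hb1, hb2⟩ := abs_lt.mp hb
    have hb4 : |b| < ε4 := lt_trans hb hε84
    have hHb : HasDerivAt H (deriv H b) b :=
      ((hHanal' b (by rw [abs_lt]; constructor <;> linarith)).differentiableAt).hasDerivAt
    have hφ : HasDerivAt (fun a : ℝ => H (a + b)) (deriv H b) 0 := by
      have hinner : HasDerivAt (fun a : ℝ => a + b) 1 0 := by
        simpa using (hasDerivAt_id (0:ℝ)).add_const b
      have hHb' : HasDerivAt H (deriv H b) ((fun a : ℝ => a + b) 0) := by
        simpa using hHb
      have h := hHb'.comp 0 hinner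
      exact h.congr_deriv (mul_one _)
    have hψ : HasDerivAt (fun a : ℝ => H a * H b) (c * H b) 0 := by
      have h0 : HasDerivAt H c 0 :=
        ((hHanal' 0 (by simpa using hε2pos)).differentiableAt).hasDerivAt
      exact h0.mul_const (H b)
    have hev : (fun a : ℝ => H a * H b) =ᶠ[𝓝 (0:ℝ)] (fun a : ℝ => H (a + b)) := by
      filter_upwards [Metric.ball_mem_nhds (0:ℝ) hε8pos] with a ha
      rw [Metric.mem_ball, Real.dist_eq, sub_zero] at ha
      exact (claim2 a b (lt_trans ha hε84) hb4).symm
    have h2 : HasDerivAt (fun a : ℝ => H a * H b) (deriv H b) 0 :=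
      hφ.congr_of_eventuallyEq hev
    have huniq : deriv H b = c * H b := h2.unique hψ
    exact huniq ▸ hHb
  -- constancy of H t * exp (-c t)
  have hFd : ∀ t ∈ Metric.ball (0:ℝ) ε8,
      HasDerivAt (fun t : ℝ => H t * Real.exp (-c * t)) 0 t := by
    intro t ht
    rw [Metric.mem_ball, Real.dist_eq, sub_zero] at ht
    have h1 := hderiv t ht
    have h3 : HasDerivAt (fun u : ℝ => -c * u) (-c) t := by
      simpa using (hasDerivAt_id t).const_mul (-c)
    have h2 := h3.exp
    have h4 := h1.mul h2
    exact h4.congr_deriv (by ring)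
  have hFconst : ∀ t : ℝ, |t| < ε8 → H t * Real.exp (-c * t) = 1 := by
    intro t ht
    have hmem : t ∈ Metric.ball (0:ℝ) ε8 := by
      rw [Metric.mem_ball, Real.dist_eq, sub_zero]; exact ht
    have h0mem : (0:ℝ) ∈ Metric.ball (0:ℝ) ε8 := Metric.mem_ball_self hε8pos
    have hdiffon : DifferentiableOn ℝ (fun t : ℝ => H t * Real.exp (-c * t))
        (Metric.ball (0:ℝ) ε8) :=
      fun x hx => ((hFd x hx).differentiableAt).differentiableWithinAt
    have hfz : ∀ x ∈ Metric.ball (0:ℝ) ε8,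
        fderivWithin ℝ (fun t : ℝ => H t * Real.exp (-c * t)) (Metric.ball (0:ℝ) ε8) x = 0 := by
      intro x hx
      have h1 := (hFd x hx).hasFDerivAt
      have h2 := h1.hasFDerivWithinAt.fderivWithin (Metric.isOpen_ball.uniqueDiffWithinAt hx)
      rw [h2]
      ext y
      simp
    have hconst := Convex.is_const_of_fderivWithin_eq_zero (𝕜 := ℝ) (convex_ball (0:ℝ) ε8)
      hdiffon hfz hmem h0mem
    simpa [hH0] using hconst
  have hHexp : ∀ t : ℝ, |t| < ε8 → H t = Real.exp (c * t) := by
    intro t ht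
    have h := hFconst t ht
    have h2 : Real.exp (-c * t) * Real.exp (c * t) = 1 := by
      rw [← Real.exp_add]
      norm_num
    calc H t = H t * Real.exp (-c * t) * Real.exp (c * t) := by
          rw [mul_assoc, h2, mul_one]
      _ = Real.exp (c * t) := by rw [h, one_mul]
  set lam : ℝ := -c with hlamdef
  have hlam0 : 0 ≤ lam := by
    set t0 : ℝ := min ε8 1 / 2 with ht0def
    have ht0pos : 0 < t0 := by
      rw [ht0def]
      have := lt_min hε8pos one_pos
      positivity
    have ht0e : t0 < ε8 := by
      rw [ht0def]
      have h1 : min ε8 1 ≤ ε8 := min_le_left _ _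
      linarith
    have ht0le1 : t0 ≤ 1 := by
      rw [ht0def]
      have h1 : min ε8 1 ≤ 1 := min_le_right _ _
      linarith
    have h1 : H t0 ≤ 1 := hGle1 t0 ht0pos.le ht0le1
    rw [hHexp t0 (by rw [abs_of_pos ht0pos]; exact ht0e)] at h1
    have h2 : c * t0 ≤ 0 := by
      by_contra hcon
      push_neg at hcon
      have h3 : (1:ℝ) < Real.exp (c * t0) := by
        calc (1:ℝ) = Real.exp 0 := Real.exp_zero.symm
          _ < Real.exp (c * t0) := Real.exp_lt_exp.mpr hcon
      linarith
    nlinarith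
  set Efun : ℝ → ℝ := fun s => Real.exp (c * (1 - s)) with hEdef
  have hfinal : Set.EqOn G Efun (Metric.ball (0:ℝ) r) := by
    apply AnalyticOnNhd.eqOn_of_preconnected_of_frequently_eq (z₀ := (1:ℝ))
    · intro x hx
      rw [Metric.mem_ball, Real.dist_eq, sub_zero] at hx
      exact hGanal x hx
    · intro x hx
      have hinner : AnalyticAt ℝ (fun s : ℝ => c * (1 - s)) x :=
        analyticAt_const.mul (analyticAt_const.sub analyticAt_id)
      exact AnalyticAt.comp (g := Real.exp) (f := fun s : ℝ => c * (1 - s)) (x := x)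
        analyticAt_rexp hinner
    · exact (convex_ball (0:ℝ) r).isPreconnected
    · rw [Metric.mem_ball, Real.dist_eq, sub_zero, abs_one]; exact hr1
    · rw [(nhdsWithin_hasBasis Metric.nhds_basis_ball _).frequently_iff]
      intro ε hε
      set t : ℝ := min ε ε8 / 2 with htdef
      have htpos : 0 < t := by
        rw [htdef]
        have := lt_min hε hε8pos
        positivity
      have hte : t < ε := by
        rw [htdef]
        have h1 : min ε ε8 ≤ ε := min_le_left _ _
        linarith
      have ht8 : t < ε8 := by
        rw [htdef]
        have h1 : min ε ε8 ≤ ε8 := min_le_right _ _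
        linarith
      refine ⟨1 - t, ⟨?_, ?_⟩, ?_⟩
      · rw [Metric.mem_ball, Real.dist_eq]
        rw [show (1:ℝ) - t - 1 = -t by ring, abs_neg, abs_of_pos htpos]
        exact hte
      · show (1:ℝ) - t ≠ 1
        intro hcon
        have : t = 0 := by linarith
        exact htpos.ne' this
      · show G (1 - t) = Efun (1 - t)
        have h1 : G (1 - t) = H t := rfl
        rw [h1, hHexp t (by rw [abs_of_pos htpos]; exact ht8), hEdef]
        simp only []
        rw [show (1:ℝ) - (1 - t) = t by ring]
  have hev : G =ᶠ[𝓝 (0:ℝ)] Efun := by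
    filter_upwards [Metric.ball_mem_nhds (0:ℝ) hr0] with s hs using hfinal hs
  -- power series of Efun
  set qs : ℕ → ℝ := fun m => Real.exp (-lam) * lam ^ m / (Nat.factorial m) with hqsdef
  have hqsum : Summable fun n => |qs n| * r ^ n := by
    have h1 : Summable fun n : ℕ => (|lam| * r) ^ n / (Nat.factorial n) :=
      Real.summable_pow_div_factorial (|lam| * r)
    have h2 := h1.mul_left (Real.exp (-lam))
    refine h2.congr fun n => ?_
    rw [hqsdef]
    simp only []
    rw [abs_div, abs_mul, abs_of_pos (Real.exp_pos _), abs_pow, mul_pow,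
      Nat.abs_cast]
    field_simp
  have hEsum : ∀ y : ℝ, |y| < r → HasSum (fun n => qs n * y ^ n) (Efun y) := by
    intro y hy
    have h1 : HasSum (fun n : ℕ => (lam * y) ^ n / (Nat.factorial n))
        (Real.exp (lam * y)) := by
      rw [Real.exp_eq_exp_ℝ]
      exact NormedSpace.expSeries_div_hasSum_exp (lam * y)
    have h2 := h1.mul_left (Real.exp (-lam))
    have h3 : (fun n : ℕ => Real.exp (-lam) * ((lam * y) ^ n / (Nat.factorial n)))
        = fun n => qs n * y ^ n := by
      funext n
      rw [hqsdef]
      simp only [mul_pow]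
      ring
    rw [h3] at h2
    have h4 : Real.exp (-lam) * Real.exp (lam * y) = Efun y := by
      rw [hEdef, ← Real.exp_add]
      congr 1
      rw [hlamdef]
      ring
    rwa [h4] at h2
  have hQball := myHasFPowerSeriesOnBall_ofScalars qs Efun r hr0 hqsum hEsum
  have hPball := myHasFPowerSeriesOnBall_ofScalars p G r hr0 habs hGsum
  have hsame : FormalMultilinearSeries.ofScalars ℝ p
      = FormalMultilinearSeries.ofScalars ℝ qs :=
    HasFPowerSeriesAt.eq_formalMultilinearSeries_of_eventually
      hPball.hasFPowerSeriesAt hQball.hasFPowerSeriesAt hev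
  have hpq : p = qs := by
    rwa [FormalMultilinearSeries.ofScalars_series_eq_iff] at hsame
  refine ⟨lam, hlam0, fun m => ?_⟩
  have := congrFun hpq m
  rw [hqsdef] at this
  exact this
end

section
/- Under the Boltzmann occupancy calibration, the marginal inclusion probability of each element matches the Boltzmann distribution over powersets: for every ℓ ∈ A, P(ν'_ℓ = 1) = z^{N(ℓ)} / (1 + z^{N(ℓ)}). -/
open MeasureTheory ProbabilityTheory

/-- Under the Boltzmann occupancy calibration (frequencies
`f ℓ = log (1 + z ^ N ℓ) / λ` with `λ = ∑ log (1 + z ^ N ℓ)`, and a Poisson(λ)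
number of balls), the marginal inclusion probability of each element matches the
Boltzmann distribution over powersets: `P (ν'_ℓ = 1) = z ^ N ℓ / (1 + z ^ N ℓ)`. -/
theorem boltzmann_occupancy_marginal
    {Ω A : Type*} [MeasurableSpace Ω] [MeasurableSpace A]
    [MeasurableSingletonClass A] [Countable A] [DecidableEq A] [Nonempty A]
    (μ : Measure Ω) [IsProbabilityMeasure μ]
    (N : A → ℕ) (z : ℝ) (hz0 : 0 < z) (hz1 : z < 1)
    (hsum : Summable (fun ℓ : A => z ^ N ℓ))
    (lam : ℝ) (hlam : lam = ∑' ℓ : A, Real.log (1 + z ^ N ℓ))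
    (f : A → ℝ) (hf : ∀ ℓ, f ℓ = Real.log (1 + z ^ N ℓ) / lam)
    (M : Ω → ℕ) (hM : Measurable M)
    (hMpois : ∀ m : ℕ, (μ {ω | M ω = m}).toReal
        = Real.exp (-lam) * lam ^ m / (Nat.factorial m))
    (X : ℕ → Ω → A) (hX : ∀ k, Measurable (X k))
    (hXdist : ∀ k ℓ, (μ {ω | X k ω = ℓ}).toReal = f ℓ)
    (hXiid : iIndepFun X μ)
    (hMX : IndepFun M (fun ω k => X k ω) μ)
    (ν : A → Ω → ℕ)
    (hν : ∀ ℓ ω, ν ℓ ω = ∑ k ∈ Finset.range (M ω), (if X k ω = ℓ then 1 else 0))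
    (ℓ : A) :
    (μ {ω | 1 ≤ ν ℓ ω}).toReal = z ^ N ℓ / (1 + z ^ N ℓ) := by
  classical
  set p := z ^ N ℓ with hp
  have hp0 : 0 < p := pow_pos hz0 _
  have hpos : ∀ a : A, 0 < z ^ N a := fun a => pow_pos hz0 _
  have hlog_nonneg : ∀ a : A, 0 ≤ Real.log (1 + z ^ N a) := fun a =>
    Real.log_nonneg (by linarith [hpos a])
  have hlog_le : ∀ a : A, Real.log (1 + z ^ N a) ≤ z ^ N a := fun a => by
    have h := Real.log_le_sub_one_of_pos (x := 1 + z ^ N a) (by linarith [hpos a])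
    linarith
  have hlogsum : Summable (fun a : A => Real.log (1 + z ^ N a)) :=
    Summable.of_nonneg_of_le hlog_nonneg hlog_le hsum
  have hlam_pos : 0 < lam := by
    rw [hlam]
    exact Summable.tsum_pos hlogsum hlog_nonneg ℓ (Real.log_pos (by linarith))
  have hfl : f ℓ * lam = Real.log (1 + p) := by
    rw [hf]; field_simp; rfl
  -- events
  set E : ℕ → Set Ω := fun m =>
    (M ⁻¹' {m}) ∩ ⋂ k ∈ Finset.range m, X k ⁻¹' {ℓ}ᶜ with hE
  have hEmeas : ∀ m, MeasurableSet (E m) := by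
    intro m
    exact (hM (measurableSet_singleton m)).inter
      (MeasurableSet.biInter (Set.to_countable _)
        (fun k _ => (hX k) (measurableSet_singleton ℓ).compl))
  have hTeq : {ω | ν ℓ ω = 0} = ⋃ m, E m := by
    ext ω
    simp only [Set.mem_setOf_eq, hν, Finset.sum_eq_zero_iff, Set.mem_iUnion, hE,
      Set.mem_inter_iff, Set.mem_iInter, Set.mem_preimage, Set.mem_compl_iff,
      Set.mem_singleton_iff, Finset.mem_range, ite_eq_right_iff, one_ne_zero, imp_false]
    constructor
    · intro h; exact ⟨M ω, rfl, fun k hk => h k hk⟩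
    · rintro ⟨m, rfl, h⟩; exact h
  have hTmeas : MeasurableSet {ω | ν ℓ ω = 0} := hTeq ▸ MeasurableSet.iUnion hEmeas
  have hdisj : Pairwise (Function.onFun Disjoint E) := by
    intro i j hij
    refine Set.disjoint_left.2 ?_
    rintro ω ⟨hi, -⟩ ⟨hj, -⟩
    exact hij (hi.symm.trans hj)
  -- measure of each piece
  have hfactor : ∀ k, (μ (X k ⁻¹' {ℓ}ᶜ)) = ENNReal.ofReal (1 - f ℓ) := by
    intro k
    have hms : MeasurableSet (X k ⁻¹' {ℓ}) := (hX k) (measurableSet_singleton ℓ)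
    have h1 : μ (X k ⁻¹' {ℓ}ᶜ) = 1 - μ (X k ⁻¹' {ℓ}) := by
      rw [Set.preimage_compl, measure_compl hms (measure_ne_top μ _), measure_univ]
    have h2 : μ (X k ⁻¹' {ℓ}) = ENNReal.ofReal (f ℓ) := by
      rw [← hXdist k ℓ, ENNReal.ofReal_toReal (measure_ne_top μ _)]
      rfl
    have hle : μ (X k ⁻¹' {ℓ}) ≤ 1 := prob_le_one
    rw [h1, h2]
    rw [h2] at hle
    have hfnn : (0:ℝ) ≤ f ℓ := by rw [← hXdist 0 ℓ]; exact ENNReal.toReal_nonneg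
    have hf1 : f ℓ ≤ 1 := by
      by_contra hcon
      push_neg at hcon
      have := (ENNReal.ofReal_le_one).1 hle
      linarith
    rw [ENNReal.ofReal_sub _ hfnn, ENNReal.ofReal_one]
  have hpiece : ∀ m, (μ (E m)).toReal
      = (Real.exp (-lam) * lam ^ m / (Nat.factorial m)) * (1 - f ℓ) ^ m := by
    intro m
    set t : Set (ℕ → A) := ⋂ k ∈ Finset.range m, (fun g : ℕ → A => g k) ⁻¹' {ℓ}ᶜ with ht
    have htmeas : MeasurableSet t :=
      MeasurableSet.biInter (Set.to_countable _)
        (fun k _ => (measurable_pi_apply k) (measurableSet_singleton ℓ).compl)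
    have hpre : (fun ω k => X k ω) ⁻¹' t = ⋂ k ∈ Finset.range m, X k ⁻¹' {ℓ}ᶜ := by
      ext ω
      simp [ht]
    have hsplit : μ (E m) = μ (M ⁻¹' {m}) * μ ((fun ω k => X k ω) ⁻¹' t) := by
      show μ ((M ⁻¹' {m}) ∩ ⋂ k ∈ Finset.range m, X k ⁻¹' {ℓ}ᶜ) = _
      rw [← hpre]
      exact hMX.measure_inter_preimage_eq_mul {m} t (measurableSet_singleton m) htmeas
    have hprod : μ ((fun ω k => X k ω) ⁻¹' t)
        = ∏ k ∈ Finset.range m, μ (X k ⁻¹' {ℓ}ᶜ) := by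
      rw [hpre]
      exact hXiid.measure_inter_preimage_eq_mul (Finset.range m)
        (sets := fun _ => {ℓ}ᶜ) (fun k _ => (measurableSet_singleton ℓ).compl)
    have hfnn : (0:ℝ) ≤ f ℓ := by rw [← hXdist 0 ℓ]; exact ENNReal.toReal_nonneg
    have h1fnn : (0:ℝ) ≤ 1 - f ℓ := by
      have h := ENNReal.toReal_mono ENNReal.one_ne_top
        (prob_le_one (μ := μ) (s := {ω | X 0 ω = ℓ}))
      rw [hXdist 0 ℓ, ENNReal.toReal_one] at h
      linarith
    have : μ (E m) = μ (M ⁻¹' {m}) * ENNReal.ofReal ((1 - f ℓ) ^ m) := by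
      rw [hsplit, hprod]
      congr 1
      simp only [hfactor]
      rw [Finset.prod_const, Finset.card_range, ← ENNReal.ofReal_pow h1fnn]
    rw [this, ENNReal.toReal_mul, ENNReal.toReal_ofReal (pow_nonneg h1fnn m)]
    congr 1
    exact hMpois m
  -- sum up
  have hT : (μ {ω | ν ℓ ω = 0}).toReal = Real.exp (-(f ℓ * lam)) := by
    rw [hTeq, measure_iUnion hdisj hEmeas, ENNReal.tsum_toReal_eq (fun m => measure_ne_top μ _)]
    have hterm : ∀ m, (μ (E m)).toReal
        = Real.exp (-lam) * ((lam * (1 - f ℓ)) ^ m / (Nat.factorial m)) := by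
      intro m
      rw [hpiece m, mul_pow]
      ring
    rw [tsum_congr hterm, tsum_mul_left]
    have hexp : ∑' m : ℕ, (lam * (1 - f ℓ)) ^ m / (Nat.factorial m)
        = Real.exp (lam * (1 - f ℓ)) := by
      rw [Real.exp_eq_exp_ℝ, NormedSpace.exp_eq_tsum_div]
    rw [hexp, ← Real.exp_add]
    congr 1
    ring
  have hcompl : {ω | 1 ≤ ν ℓ ω} = {ω | ν ℓ ω = 0}ᶜ := by
    ext ω
    simp [Nat.one_le_iff_ne_zero]
  rw [hcompl, measure_compl hTmeas (measure_ne_top μ _), measure_univ,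
    ENNReal.toReal_sub_of_le prob_le_one ENNReal.one_ne_top, ENNReal.toReal_one, hT, hfl,
    Real.exp_neg, Real.exp_log (by linarith)]
  field_simp
  ring
end

section
/- Under the Boltzmann occupancy calibration, the random set {ℓ ∈ A : ν'_ℓ = 1} is almost surely finite and follows the Boltzmann distribution over PSet(A): for every finite subset S ⊆ A, P({ℓ : ν'_ℓ = 1} = S) = z^{Σ_{ℓ∈S} N(ℓ)} / C(z), where C(z) = ∏_{ℓ∈A} (1 + z^{N(ℓ)}) is a convergent infinite product. -/
open Finset

lemma aux_inner {A : Type*} [DecidableEq A] (S T' : Finset A) (hT' : T' ⊆ S) :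
    ∑ T ∈ S.powerset.filter (fun T => T' ⊆ T), (-1 : ℝ) ^ ((S \ T).card)
      = if T' = S then 1 else 0 := by
  have key : ∑ T ∈ S.powerset.filter (fun T => T' ⊆ T), (-1 : ℝ) ^ ((S \ T).card)
      = ∑ U ∈ (S \ T').powerset, (-1 : ℝ) ^ U.card := by
    refine Finset.sum_nbij' (fun T => S \ T) (fun U => S \ U) ?_ ?_ ?_ ?_ ?_
    · intro T hT
      simp only [mem_filter, mem_powerset] at hT
      exact mem_powerset.2 (sdiff_subset_sdiff le_rfl hT.2)
    · intro U hU
      simp only [mem_powerset] at hU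
      simp only [mem_filter, mem_powerset]
      refine ⟨sdiff_subset, fun x hx => ?_⟩
      simp only [mem_sdiff]
      exact ⟨hT' hx, fun hxU => (mem_sdiff.1 (hU hxU)).2 hx⟩
    · intro T hT
      simp only [mem_filter, mem_powerset] at hT
      exact Finset.sdiff_sdiff_eq_self hT.1
    · intro U hU
      simp only [mem_powerset] at hU
      exact Finset.sdiff_sdiff_eq_self (hU.trans sdiff_subset)
    · intro T hT; rfl
  rw [key]
  have := Finset.sum_powerset_neg_one_pow_card (x := S \ T')
  have h2 : ((∑ m ∈ (S \ T').powerset, (-1 : ℤ) ^ m.card : ℤ) : ℝ)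
      = ∑ U ∈ (S \ T').powerset, (-1 : ℝ) ^ U.card := by push_cast; rfl
  rw [← h2, this]
  have : S \ T' = ∅ ↔ T' = S := by
    constructor
    · intro h; exact hT'.antisymm (sdiff_eq_empty_iff_subset.1 h)
    · intro h; subst h; simp
  by_cases h : T' = S <;> simp [this, h]

lemma aux_mobius {A : Type*} [DecidableEq A] (S : Finset A) (h g : Finset A → ℝ)
    (hg : ∀ T ∈ S.powerset, g T = ∑ T' ∈ T.powerset, h T') :
    ∑ T ∈ S.powerset, (-1 : ℝ) ^ ((S \ T).card) * g T = h S := by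
  calc ∑ T ∈ S.powerset, (-1 : ℝ) ^ ((S \ T).card) * g T
      = ∑ T ∈ S.powerset, ∑ T' ∈ T.powerset, (-1 : ℝ) ^ ((S \ T).card) * h T' := by
        refine Finset.sum_congr rfl fun T hT => ?_
        rw [hg T hT, Finset.mul_sum]
    _ = ∑ T' ∈ S.powerset, ∑ T ∈ S.powerset.filter (fun T => T' ⊆ T),
          (-1 : ℝ) ^ ((S \ T).card) * h T' := by
        refine Finset.sum_comm' fun T T' => ?_
        simp only [mem_powerset, mem_filter]
        constructor
        · rintro ⟨h1, h2⟩; exact ⟨⟨h1, h2⟩, h2.trans h1⟩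
        · rintro ⟨⟨h1, h2⟩, h3⟩; exact ⟨h1, h2⟩
    _ = ∑ T' ∈ S.powerset, (if T' = S then 1 else 0) * h T' := by
        refine Finset.sum_congr rfl fun T' hT' => ?_
        rw [← Finset.sum_mul, aux_inner S T' (mem_powerset.1 hT')]
    _ = h S := by
        simp only [ite_mul, one_mul, zero_mul]
        rw [Finset.sum_ite_eq' S.powerset S h]
        simp

open MeasureTheory ProbabilityTheory

/-- Under the Boltzmann occupancy calibration, the random set of
occupied boxes `{ℓ | ν_ℓ ≥ 1}` is almost surely finite and follows the Boltzmann
distribution over `PSet A`: for every finite `S ⊆ A`,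
`P ({ℓ | ν'_ℓ = 1} = S) = z ^ (∑_{ℓ ∈ S} N ℓ) / C z` where
`C z = ∏_{ℓ ∈ A} (1 + z ^ N ℓ)`. -/
theorem boltzmann_occupancy_distribution
    {Ω A : Type*} [MeasurableSpace Ω] [MeasurableSpace A]
    [MeasurableSingletonClass A] [Countable A] [DecidableEq A] [Nonempty A]
    (μ : Measure Ω) [IsProbabilityMeasure μ]
    (N : A → ℕ) (z : ℝ) (hz0 : 0 < z) (hz1 : z < 1)
    (hsum : Summable (fun ℓ : A => z ^ N ℓ))
    (lam : ℝ) (hlam : lam = ∑' ℓ : A, Real.log (1 + z ^ N ℓ))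
    (f : A → ℝ) (hf : ∀ ℓ, f ℓ = Real.log (1 + z ^ N ℓ) / lam)
    (M : Ω → ℕ) (hM : Measurable M)
    (hMpois : ∀ m : ℕ, (μ {ω | M ω = m}).toReal
        = Real.exp (-lam) * lam ^ m / (Nat.factorial m))
    (X : ℕ → Ω → A) (hX : ∀ k, Measurable (X k))
    (hXdist : ∀ k ℓ, (μ {ω | X k ω = ℓ}).toReal = f ℓ)
    (hXiid : iIndepFun X μ)
    (hMX : IndepFun M (fun ω k => X k ω) μ)
    (ν : A → Ω → ℕ)
    (hν : ∀ ℓ ω, ν ℓ ω = ∑ k ∈ Finset.range (M ω), (if X k ω = ℓ then 1 else 0)) :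
    Multipliable (fun ℓ : A => 1 + z ^ N ℓ) ∧
    (∀ᵐ ω ∂μ, {ℓ : A | 1 ≤ ν ℓ ω}.Finite) ∧
    ∀ S : Finset A,
      (μ {ω | {ℓ : A | 1 ≤ ν ℓ ω} = ↑S}).toReal
        = z ^ (∑ ℓ ∈ S, N ℓ) / ∏' ℓ : A, (1 + z ^ N ℓ) := by
  classical
  -- basic positivity
  have hpowpos : ∀ ℓ : A, (0:ℝ) < z ^ N ℓ := fun ℓ => pow_pos hz0 _
  have h1pos : ∀ ℓ : A, (0:ℝ) < 1 + z ^ N ℓ := fun ℓ => by linarith [hpowpos ℓ]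
  have h1lt : ∀ ℓ : A, (1:ℝ) < 1 + z ^ N ℓ := fun ℓ => by linarith [hpowpos ℓ]
  -- summable log
  have hsl : Summable (fun ℓ : A => Real.log (1 + z ^ N ℓ)) := by
    refine Summable.of_nonneg_of_le (fun ℓ => Real.log_nonneg (le_of_lt (h1lt ℓ))) ?_ hsum
    intro ℓ
    have := Real.log_le_sub_one_of_pos (h1pos ℓ)
    linarith
  have hlampos : 0 < lam := by
    rw [hlam]
    exact Summable.tsum_pos hsl (fun ℓ => Real.log_nonneg (le_of_lt (h1lt ℓ)))
      (Classical.arbitrary A) (Real.log_pos (h1lt (Classical.arbitrary A)))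
  have hlamne : lam ≠ 0 := ne_of_gt hlampos
  -- HasProd
  have hprod : HasProd (fun ℓ : A => 1 + z ^ N ℓ) (Real.exp lam) := by
    have h := hsl.hasSum.rexp
    rw [← hlam] at h
    convert h using 1
    funext ℓ
    simp [Function.comp, Real.exp_log (h1pos ℓ)]
  have hmult : Multipliable (fun ℓ : A => 1 + z ^ N ℓ) := ⟨_, hprod⟩
  have htprod : (∏' ℓ : A, (1 + z ^ N ℓ)) = Real.exp lam := hprod.tprod_eq
  -- occupancy set description
  have h1le : ∀ ℓ ω, 1 ≤ ν ℓ ω ↔ ∃ k < M ω, X k ω = ℓ := by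
    intro ℓ ω
    rw [hν]
    rw [Nat.one_le_iff_ne_zero, Ne, Finset.sum_eq_zero_iff]
    simp [Finset.mem_range]
  refine ⟨hmult, ?_, ?_⟩
  · refine Filter.Eventually.of_forall fun ω => ?_
    refine Set.Finite.subset (Finset.finite_toSet
      ((Finset.range (M ω)).image fun k => X k ω)) ?_
    intro ℓ hℓ
    rw [Set.mem_setOf_eq, h1le] at hℓ
    obtain ⟨k, hk, hkℓ⟩ := hℓ
    simp only [Finset.coe_image, Set.mem_image, Finset.mem_coe, Finset.mem_range]
    exact ⟨k, hk, hkℓ⟩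
  intro S
  -- notation
  set σ : Finset A → ℝ := fun T => ∑ ℓ ∈ T, f ℓ with hσ
  set R : ℕ → Ω → Set A := fun m ω => {ℓ : A | ∃ k < m, X k ω = ℓ} with hRdef
  -- measurability
  have hmeasT : ∀ T : Finset A, MeasurableSet (↑T : Set A) :=
    fun T => T.countable_toSet.measurableSet
  have hmeasMm : ∀ m : ℕ, MeasurableSet {ω | M ω = m} :=
    fun m => hM (measurableSet_singleton m)
  have hmeasXT : ∀ (k : ℕ) (T : Finset A), MeasurableSet (X k ⁻¹' ↑T) :=
    fun k T => (hX k) (hmeasT T)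
  have hmeasXl : ∀ (k : ℕ) (ℓ : A), MeasurableSet {ω | X k ω = ℓ} :=
    fun k ℓ => (hX k) (measurableSet_singleton ℓ)
  have hsubEq : ∀ (m : ℕ) (T : Finset A),
      {ω | ∀ k < m, X k ω ∈ (↑T : Set A)} = ⋂ k ∈ Finset.range m, X k ⁻¹' ↑T := by
    intro m T
    ext ω
    simp [Finset.mem_range]
  have hmeasSub : ∀ (m : ℕ) (T : Finset A),
      MeasurableSet {ω | ∀ k < m, X k ω ∈ (↑T : Set A)} := by
    intro m T
    rw [hsubEq]
    exact MeasurableSet.biInter (Set.to_countable _) fun k _ => hmeasXT k T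
  have hReq : ∀ (m : ℕ) (T : Finset A) (ω : Ω),
      R m ω = ↑T ↔ (∀ k < m, X k ω ∈ (↑T : Set A)) ∧ ∀ ℓ ∈ T, ∃ k < m, X k ω = ℓ := by
    intro m T ω
    constructor
    · intro h
      constructor
      · intro k hk
        have : X k ω ∈ R m ω := ⟨k, hk, rfl⟩
        rwa [h] at this
      · intro ℓ hℓ
        have : ℓ ∈ R m ω := by rw [h]; exact hℓ
        exact this
    · rintro ⟨h1, h2⟩
      apply Set.Subset.antisymm
      · rintro ℓ ⟨k, hk, rfl⟩
        exact h1 k hk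
      · intro ℓ hℓ
        exact h2 ℓ hℓ
  have hmeasR : ∀ (m : ℕ) (T : Finset A), MeasurableSet {ω | R m ω = ↑T} := by
    intro m T
    have h2 : {ω | R m ω = ↑T} = {ω | ∀ k < m, X k ω ∈ (↑T : Set A)} ∩
        {ω | ∀ ℓ ∈ T, ∃ k < m, X k ω = ℓ} := by
      ext ω
      rw [Set.mem_inter_iff]
      exact hReq m T ω
    have h3 : {ω | ∀ ℓ ∈ T, ∃ k < m, X k ω = ℓ}
        = ⋂ ℓ ∈ T, ⋃ k ∈ Finset.range m, {ω | X k ω = ℓ} := by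
      ext ω
      simp [Finset.mem_range]
    rw [h2, h3]
    exact (hmeasSub m T).inter (MeasurableSet.biInter (Set.to_countable _)
      fun ℓ _ => MeasurableSet.biUnion (Set.to_countable _) fun k _ => hmeasXl k ℓ)
  -- single-variable distribution over finite sets
  have hf0 : ∀ ℓ, 0 ≤ f ℓ := fun ℓ => (hXdist 0 ℓ) ▸ ENNReal.toReal_nonneg
  have hXval : ∀ (k : ℕ) (T : Finset A), (μ (X k ⁻¹' ↑T)).toReal = σ T := by
    intro k T
    have hdec : X k ⁻¹' ↑T = ⋃ ℓ ∈ T, {ω | X k ω = ℓ} := by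
      ext ω
      simp [Set.mem_preimage]
    rw [hdec, measure_biUnion_finset ?_ fun ℓ _ => hmeasXl k ℓ]
    · rw [ENNReal.toReal_sum fun ℓ _ => measure_ne_top μ _]
      exact Finset.sum_congr rfl fun ℓ _ => hXdist k ℓ
    · intro ℓ1 h1 ℓ2 h2 hne
      simp only [Function.onFun, Set.disjoint_left]
      rintro ω h1' h2'
      exact hne (h1'.symm.trans h2')
  -- P and Q
  set P : ℕ → Finset A → ℝ := fun m T =>
    (μ ({ω | M ω = m} ∩ {ω | ∀ k < m, X k ω ∈ (↑T : Set A)})).toReal with hPdef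
  set Q : ℕ → Finset A → ℝ := fun m T =>
    (μ ({ω | M ω = m} ∩ {ω | R m ω = ↑T})).toReal with hQdef
  -- independence computation
  have hP : ∀ (m : ℕ) (T : Finset A),
      P m T = Real.exp (-lam) * (lam * σ T) ^ m / (Nat.factorial m) := by
    intro m T
    have hBmeas : MeasurableSet {g : ℕ → A | ∀ k < m, g k ∈ (↑T : Set A)} := by
      have : {g : ℕ → A | ∀ k < m, g k ∈ (↑T : Set A)}
          = ⋂ k ∈ Finset.range m, (fun g : ℕ → A => g k) ⁻¹' ↑T := by
        ext g
        simp [Finset.mem_range]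
      rw [this]
      exact MeasurableSet.biInter (Set.to_countable _)
        fun k _ => (measurable_pi_apply k) (hmeasT T)
    have hev : {ω | M ω = m} ∩ {ω | ∀ k < m, X k ω ∈ (↑T : Set A)}
        = M ⁻¹' {m} ∩ (fun ω k => X k ω) ⁻¹' {g : ℕ → A | ∀ k < m, g k ∈ (↑T : Set A)} := rfl
    have hsplit := hMX.measure_inter_preimage_eq_mul {m}
      {g : ℕ → A | ∀ k < m, g k ∈ (↑T : Set A)} (measurableSet_singleton m) hBmeas
    have hiid := hXiid.measure_inter_preimage_eq_mul (Finset.range m)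
      (sets := fun _ => (↑T : Set A)) (fun k _ => hmeasT T)
    have hYpre : (fun ω k => X k ω) ⁻¹' {g : ℕ → A | ∀ k < m, g k ∈ (↑T : Set A)}
        = ⋂ k ∈ Finset.range m, X k ⁻¹' ↑T := by
      ext ω
      simp [Finset.mem_range]
    rw [hPdef]
    simp only
    rw [hev, hsplit, hYpre, hiid, ENNReal.toReal_mul, ENNReal.toReal_prod]
    have : ∀ k ∈ Finset.range m, (μ (X k ⁻¹' ↑T)).toReal = σ T := fun k _ => hXval k T
    rw [Finset.prod_congr rfl this, Finset.prod_const, Finset.card_range]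
    have hMm : (μ (M ⁻¹' {m})).toReal = Real.exp (-lam) * lam ^ m / (Nat.factorial m) :=
      hMpois m
    rw [hMm, mul_pow]
    ring
  -- additivity : P m T = ∑_{T' ⊆ T} Q m T'
  have hQP : ∀ (m : ℕ) (T : Finset A), P m T = ∑ T' ∈ T.powerset, Q m T' := by
    intro m T
    have hev : {ω | M ω = m} ∩ {ω | ∀ k < m, X k ω ∈ (↑T : Set A)}
        = ⋃ T' ∈ T.powerset, ({ω | M ω = m} ∩ {ω | R m ω = ↑T'}) := by
      ext ω
      simp only [Set.mem_inter_iff, Set.mem_setOf_eq, Set.mem_iUnion, Finset.mem_powerset]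
      constructor
      · rintro ⟨hm, hsub⟩
        refine ⟨T.filter (fun ℓ => ∃ k < m, X k ω = ℓ), Finset.filter_subset _ _, hm, ?_⟩
        apply Set.Subset.antisymm
        · rintro ℓ ⟨k, hk, rfl⟩
          simp only [Finset.coe_filter, Set.mem_setOf_eq, Finset.mem_coe]
          exact ⟨hsub k hk, k, hk, rfl⟩
        · intro ℓ hℓ
          simp only [Finset.coe_filter, Set.mem_setOf_eq, Finset.mem_coe] at hℓ
          exact hℓ.2
      · rintro ⟨T', hT', hm, hR⟩
        refine ⟨hm, fun k hk => ?_⟩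
        have : X k ω ∈ R m ω := ⟨k, hk, rfl⟩
        rw [hR] at this
        exact hT' this
    rw [hPdef]
    simp only
    rw [hev, measure_biUnion_finset ?_ (fun T' _ => (hmeasMm m).inter (hmeasR m T'))]
    · rw [ENNReal.toReal_sum fun T' _ => measure_ne_top μ _]
    · intro T1 h1 T2 h2 hne
      simp only [Function.onFun, Set.disjoint_left]
      rintro ω ⟨_, hR1⟩ ⟨_, hR2⟩
      exact hne (Finset.coe_injective (hR1.symm.trans hR2))
  -- Poisson summation of P
  have hPform : ∀ T : Finset A, ∀ m : ℕ,
      P m T = Real.exp (-lam) * ((lam * σ T) ^ m / (Nat.factorial m)) := by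
    intro T m
    rw [hP m T, mul_div_assoc]
  have hsummP : ∀ T : Finset A, Summable (fun m => P m T) := by
    intro T
    have := (Real.summable_pow_div_factorial (lam * σ T)).mul_left (Real.exp (-lam))
    refine this.congr fun m => ?_
    rw [hPform T m]
  have hlamσ : ∀ T ∈ S.powerset, lam * σ T = ∑ ℓ ∈ T, Real.log (1 + z ^ N ℓ) := by
    intro T _
    rw [hσ]
    simp only
    rw [Finset.mul_sum]
    refine Finset.sum_congr rfl fun ℓ _ => ?_
    rw [hf ℓ, mul_div_cancel₀ _ hlamne]
  have htsumP : ∀ T ∈ S.powerset, (∑' m, P m T)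
      = Real.exp (-lam) * ∏ ℓ ∈ T, (1 + z ^ N ℓ) := by
    intro T hT
    have h1 : (∑' m, P m T)
        = Real.exp (-lam) * ∑' m, ((lam * σ T) ^ m / (Nat.factorial m)) := by
      rw [← tsum_mul_left]
      exact tsum_congr fun m => hPform T m
    have h2 : (∑' m : ℕ, ((lam * σ T) ^ m / (Nat.factorial m) : ℝ))
        = Real.exp (lam * σ T) := by
      rw [Real.exp_eq_exp_ℝ]
      exact (NormedSpace.expSeries_div_hasSum_exp (lam * σ T)).tsum_eq
    rw [h1, h2, hlamσ T hT, Real.exp_sum]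
    congr 1
    exact Finset.prod_congr rfl fun ℓ _ => Real.exp_log (h1pos ℓ)
  -- decompose the main event over values of M
  have hmain : (μ {ω | {ℓ : A | 1 ≤ ν ℓ ω} = ↑S}).toReal = ∑' m, Q m S := by
    have hEeq : {ω | {ℓ : A | 1 ≤ ν ℓ ω} = ↑S}
        = ⋃ m, ({ω | M ω = m} ∩ {ω | R m ω = ↑S}) := by
      ext ω
      have hOcc : {ℓ : A | 1 ≤ ν ℓ ω} = R (M ω) ω := by
        ext ℓ
        exact h1le ℓ ω
      simp only [Set.mem_setOf_eq, Set.mem_iUnion, Set.mem_inter_iff, hOcc]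
      constructor
      · intro h
        exact ⟨M ω, rfl, h⟩
      · rintro ⟨m, rfl, h⟩
        exact h
    rw [hEeq, measure_iUnion ?_ (fun m => (hmeasMm m).inter (hmeasR m S))]
    · rw [ENNReal.tsum_toReal_eq fun m => measure_ne_top μ _]
    · intro m1 m2 hne
      simp only [Function.onFun, Set.disjoint_left]
      rintro ω ⟨hm1, _⟩ ⟨hm2, _⟩
      exact hne (hm1.symm.trans hm2)
  -- Moebius inversion per m
  have hQmob : ∀ m : ℕ, Q m S
      = ∑ T ∈ S.powerset, (-1 : ℝ) ^ ((S \ T).card) * P m T := by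
    intro m
    exact (aux_mobius S (Q m) (P m) (fun T _ => hQP m T)).symm
  -- swap sums and compute
  have hswap : (∑' m, Q m S)
      = ∑ T ∈ S.powerset, (-1 : ℝ) ^ ((S \ T).card) * ∑' m, P m T := by
    rw [tsum_congr hQmob, Summable.tsum_finsetSum fun T _ => (hsummP T).mul_left _]
    exact Finset.sum_congr rfl fun T _ => tsum_mul_left
  rw [hmain, hswap]
  have hfin : ∑ T ∈ S.powerset, (-1 : ℝ) ^ ((S \ T).card)
        * (Real.exp (-lam) * ∏ ℓ ∈ T, (1 + z ^ N ℓ))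
      = Real.exp (-lam) * z ^ (∑ ℓ ∈ S, N ℓ) := by
    have hexp : ∏ ℓ ∈ S, ((1 + z ^ N ℓ) + (-1))
        = ∑ T ∈ S.powerset, (∏ ℓ ∈ T, (1 + z ^ N ℓ)) * ∏ ℓ ∈ S \ T, (-1 : ℝ) :=
      Finset.prod_add _ _ S
    have hlhs : ∏ ℓ ∈ S, ((1 + z ^ N ℓ) + (-1)) = z ^ (∑ ℓ ∈ S, N ℓ) := by
      rw [← Finset.prod_pow_eq_pow_sum]
      exact Finset.prod_congr rfl fun ℓ _ => by ring
    calc ∑ T ∈ S.powerset, (-1 : ℝ) ^ ((S \ T).card)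
          * (Real.exp (-lam) * ∏ ℓ ∈ T, (1 + z ^ N ℓ))
        = Real.exp (-lam) * ∑ T ∈ S.powerset,
            (∏ ℓ ∈ T, (1 + z ^ N ℓ)) * ∏ ℓ ∈ S \ T, (-1 : ℝ) := by
          rw [Finset.mul_sum]
          refine Finset.sum_congr rfl fun T _ => ?_
          rw [Finset.prod_const]
          ring
      _ = Real.exp (-lam) * z ^ (∑ ℓ ∈ S, N ℓ) := by rw [← hexp, hlhs]
  calc ∑ T ∈ S.powerset, (-1 : ℝ) ^ ((S \ T).card) * ∑' m, P m T
      = ∑ T ∈ S.powerset, (-1 : ℝ) ^ ((S \ T).card)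
          * (Real.exp (-lam) * ∏ ℓ ∈ T, (1 + z ^ N ℓ)) := by
        exact Finset.sum_congr rfl fun T hT => by rw [htsumP T hT]
    _ = Real.exp (-lam) * z ^ (∑ ℓ ∈ S, N ℓ) := hfin
    _ = z ^ (∑ ℓ ∈ S, N ℓ) / ∏' ℓ : A, (1 + z ^ N ℓ) := by
        rw [htprod, Real.exp_neg, div_eq_mul_inv, mul_comm]
end
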